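/- Let λ be a strict partition (a composition with strictly decreasing parts; such a λ is automatically a peak composition). Then PYQS_λ = Σ_α sgn(σ_α) · QSQ_α as formal power series, where the sum is over all peak compositions α with λ(α) = λ, λ(α) denotes the partition obtained by sorting the parts of α in decreasing order, and σ_α is the unique permutation of the positions of the parts of α that rearranges α into λ(α) (unique because the parts of α are distinct), sgn denoting its sign. -/

import Mathlib

namespace PaperSPIT

/-- The `j`-th part (1-indexed) of a composition presented as a list. -/
def part (α : List ℕ) (j : ℕ) : ℕ := α.getD (j - 1) 0

/-- The largest part. -/
def maxPart (α : List ℕ) : ℕ := α.foldr max 0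

/-- The composition diagram: boxes `(i, j)` (column `i`, row `j`), both 1-indexed,
rows numbered from bottom to top. -/
def cd (α : List ℕ) : Finset (ℕ × ℕ) :=
  (Finset.Icc 1 (maxPart α) ×ˢ Finset.Icc 1 α.length).filter fun p => p.1 ≤ part α p.2

/-- `α` is a composition of `n`. -/
def IsComposition (n : ℕ) (α : List ℕ) : Prop :=
  (∀ a ∈ α, 0 < a) ∧ α.sum = n

/-- `α` is a peak composition of `n`: all parts except possibly the last are `> 1`. -/
def IsPeakComposition (n : ℕ) (α : List ℕ) : Prop :=
  IsComposition n α ∧ ∀ i, i + 1 < α.length → 1 < α.getD i 0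

/-- A standard filling of `cd α`: a bijection from the boxes onto `{1, …, n}`
(normalized to be `0` off the diagram). -/
def IsStandardFilling (α : List ℕ) (T : ℕ × ℕ → ℕ) : Prop :=
  Set.BijOn T (cd α : Set (ℕ × ℕ)) (Set.Icc 1 α.sum) ∧
  ∀ p : ℕ × ℕ, p ∉ cd α → T p = 0

def RowsIncrease (α : List ℕ) (T : ℕ × ℕ → ℕ) : Prop :=
  ∀ i j : ℕ, (i, j) ∈ cd α → (i + 1, j) ∈ cd α → T (i, j) < T (i + 1, j)

def RowsWeaklyIncrease (α : List ℕ) (T : ℕ × ℕ → ℕ) : Prop :=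
  ∀ i j : ℕ, (i, j) ∈ cd α → (i + 1, j) ∈ cd α → T (i, j) ≤ T (i + 1, j)

def FirstColIncreases (α : List ℕ) (T : ℕ × ℕ → ℕ) : Prop :=
  ∀ j : ℕ, (1, j) ∈ cd α → (1, j + 1) ∈ cd α → T (1, j) < T (1, j + 1)

/-- Standard immaculate tableau. -/
def IsSIT (α : List ℕ) (T : ℕ × ℕ → ℕ) : Prop :=
  IsStandardFilling α T ∧ RowsIncrease α T ∧ FirstColIncreases α T

/-- Peak-tableau condition: for every `1 ≤ k ≤ n` the boxes with entries `≤ k`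
form the diagram of a peak composition. -/
def PeakCond (α : List ℕ) (T : ℕ × ℕ → ℕ) : Prop :=
  ∀ k : ℕ, 1 ≤ k → k ≤ α.sum → ∃ β : List ℕ,
    IsPeakComposition k β ∧ (cd α).filter (fun p => T p ≤ k) = cd β

/-- Standard peak immaculate tableau. -/
def IsSPIT (α : List ℕ) (T : ℕ × ℕ → ℕ) : Prop := IsSIT α T ∧ PeakCond α T

def SPITset (α : List ℕ) : Set (ℕ × ℕ → ℕ) := {T | IsSPIT α T}

/-- The Young triple condition. -/
def YoungTriple (α : List ℕ) (T : ℕ × ℕ → ℕ) : Prop :=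
  ∀ k i j : ℕ, i < j → (k, j) ∈ cd α → (k + 1, i) ∈ cd α → T (k, j) ≤ T (k + 1, i) →
    (k + 1, j) ∈ cd α ∧ T (k + 1, j) < T (k + 1, i)

/-- Standard Young composition tableau. -/
def IsSYCT (α : List ℕ) (T : ℕ × ℕ → ℕ) : Prop :=
  IsStandardFilling α T ∧ RowsIncrease α T ∧ FirstColIncreases α T ∧ YoungTriple α T

def SYCTset (α : List ℕ) : Set (ℕ × ℕ → ℕ) := {T | IsSYCT α T}

/-- Standard peak Young composition tableau. -/
def IsSPYCT (α : List ℕ) (T : ℕ × ℕ → ℕ) : Prop := IsSYCT α T ∧ PeakCond α T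

def SPYCTset (α : List ℕ) : Set (ℕ × ℕ → ℕ) := {T | IsSPYCT α T}

/-- Row reading word `w_r`: rows from top to bottom, each row left to right. -/
def wR (α : List ℕ) (T : ℕ × ℕ → ℕ) : List ℕ :=
  ((List.range α.length).reverse.map fun j =>
    (List.range (part α (j + 1))).map fun i => T (i + 1, j + 1)).flatten

/-- The `i`-th column of a filling, read bottom to top. -/
def colList (α : List ℕ) (T : ℕ × ℕ → ℕ) (i : ℕ) : List ℕ :=
  ((List.range α.length).filter fun j => decide (i ≤ part α (j + 1))).map
    fun j => T (i, j + 1)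

/-- Column reading word `w_c`: columns left to right, each column bottom to top. -/
def wC (α : List ℕ) (T : ℕ × ℕ → ℕ) : List ℕ :=
  ((List.range (maxPart α)).map fun i => colList α T (i + 1)).flatten

/-- Young reading word `w_Y`: first column top to bottom, then subsequent columns
bottom to top, columns left to right. -/
def wY (α : List ℕ) (T : ℕ × ℕ → ℕ) : List ℕ :=
  (colList α T 1).reverse ++
    ((List.range (maxPart α - 1)).map fun i => colList α T (i + 2)).flatten

/-- Descent set of a word with distinct letters: `i` such that `i` and `i+1` occur
and `i` occurs to the right of `i+1`. -/
def DesWord (w : List ℕ) : Finset ℕ :=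
  w.toFinset.filter fun i => (i + 1) ∈ w ∧ w.idxOf (i + 1) < w.idxOf i


def setComp (α : List ℕ) : Finset ℕ :=
  (((α.scanl (· + ·) 0).drop 1).dropLast).toFinset

def compOf (n : ℕ) (I : Finset ℕ) : List ℕ :=
  List.zipWith (fun a b => a - b) (I.sort (· ≤ ·) ++ [n]) (0 :: I.sort (· ≤ ·))

def PeakSet (X : Finset ℕ) : Finset ℕ := X.filter fun i => 1 < i ∧ i - 1 ∉ X

noncomputable def Fqs (n : ℕ) (α : List ℕ) : MvPowerSeries ℕ ℤ := fun d =>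
  (Set.ncard {f : Fin n → ℕ |
      (∀ j, 1 ≤ f j) ∧ Monotone f ∧
      (∀ j k : Fin n, (k : ℕ) = (j : ℕ) + 1 → ((j : ℕ) + 1) ∈ setComp α → f j < f k) ∧
      ∀ m : ℕ, d m = (Finset.univ.filter fun j : Fin n => f j = m).card} : ℤ)

noncomputable def Kqs (n : ℕ) (α : List ℕ) : MvPowerSeries ℕ ℤ :=
  (2 ^ ((setComp α).card + 1) : ℕ) •
    ∑ β : Composition n,
      if setComp α ⊆ symmDiff (setComp β.blocks) ((setComp β.blocks).image (· + 1))
      then Fqs n β.blocks else 0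

/-- The quasisymmetric Schur `Q`-function of a peak composition `α` of `n`. -/
noncomputable def QSQ (n : ℕ) (α : List ℕ) : MvPowerSeries ℕ ℤ :=
  ∑ᶠ T ∈ SPITset α, Kqs n (compOf n (PeakSet (DesWord (wC α T))))

/-- The peak Young quasisymmetric Schur function of a peak composition `α` of `n`. -/
noncomputable def PYQS (n : ℕ) (α : List ℕ) : MvPowerSeries ℕ ℤ :=
  ∑ᶠ T ∈ SPYCTset α, Kqs n (compOf n (PeakSet (DesWord (wY α T))))

/-!
A sign-reversing involution. Read an SPIT `T` of shape `α` as a growing sequence of shapes,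
`rowLen α T r k` being the length of row `r` in the subtableau of entries `≤ k`, and call `k` a
collision time if two rows then have the same positive length. At the last collision time take
the lowest colliding row `j`, then the lowest row `j'` colliding with it, of common length `L`,
and exchange the parts of rows `j` and `j'` lying right of column `L`. The result is an SPIT of
the shape with parts `j`, `j'` exchanged, with the same collision data and the same column
reading descents; the operation is an involution and flips `sgn(σ_α)`, so all colliding
tableaux cancel. In a collision-free SPIT the rows stay strictly ordered by length at all times,
which forces `α = λ` and the Young triple condition; conversely an SYCT of strictly decreasing
shape has no collision. For these tableaux `w_Y` and `w_c` have the same peak set, since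
reversing the first column only moves descents inside runs of consecutive entries of the first
column, and these never start a peak.
-/

/-! ### Descents of reading words -/

theorem _root_.List.Pairwise.idxOf_lt_idxOf {β : Type*} [DecidableEq β] {R : β → β → Prop}
    (hR : ∀ x y, R x y → ¬ R y x) {l : List β} {a b : β} (hl : l.Pairwise R)
    (ha : a ∈ l) (hb : b ∈ l) (hab : R a b) : l.idxOf a < l.idxOf b := by
  induction l with
  | nil => simp at ha
  | cons x t ih =>
    obtain ⟨hx, ht⟩ := List.pairwise_cons.1 hl
    by_cases hax : a = x
    · subst hax
      have hab' : a ≠ b := by rintro rfl; exact hR a a hab hab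
      rw [List.idxOf_cons_self, List.idxOf_cons_ne _ hab']
      exact Nat.succ_pos _
    · have hat : a ∈ t := (List.mem_cons.1 ha).resolve_left hax
      have hbx : b ≠ x := by rintro rfl; exact hR b a (hx a hat) hab
      have hbt : b ∈ t := (List.mem_cons.1 hb).resolve_left hbx
      rw [List.idxOf_cons_ne _ (Ne.symm hax), List.idxOf_cons_ne _ (Ne.symm hbx)]
      exact Nat.succ_lt_succ (ih ht hat hbt)

theorem _root_.List.idxOf_map_of_injOn {β γ : Type*} [DecidableEq β] [DecidableEq γ]
    {f : β → γ} {l : List β} {a : β} (hf : Set.InjOn f {x | x ∈ l}) (ha : a ∈ l) :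
    (l.map f).idxOf (f a) = l.idxOf a := by
  induction l with
  | nil => simp at ha
  | cons x t ih =>
    by_cases hax : a = x
    · subst hax
      simp
    · have hat : a ∈ t := (List.mem_cons.1 ha).resolve_left hax
      have hfx : f x ≠ f a := fun h => hax (hf (by simp) (by simp [hat]) h).symm
      rw [List.map_cons, List.idxOf_cons_ne _ hfx, List.idxOf_cons_ne _ (Ne.symm hax),
        ih (hf.mono fun y hy => List.mem_cons_of_mem _ hy) hat]

theorem mem_DesWord_map_iff {β : Type*} [DecidableEq β] {R : β → β → Prop}
    (hR : ∀ x y, R x y → ¬ R y x) {L : List β} (hL : L.Pairwise R)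
    (htot : ∀ x ∈ L, ∀ y ∈ L, R x y ∨ x = y ∨ R y x) {T : β → ℕ}
    (hT : Set.InjOn T {x | x ∈ L}) {i : ℕ} :
    i ∈ DesWord (L.map T) ↔ ∃ p ∈ L, ∃ q ∈ L, T p = i ∧ T q = i + 1 ∧ R q p := by
  have key : ∀ p ∈ L, ∀ q ∈ L,
      (L.map T).idxOf (T q) < (L.map T).idxOf (T p) ↔ R q p := by
    intro p hp q hq
    rw [List.idxOf_map_of_injOn hT hp, List.idxOf_map_of_injOn hT hq]
    refine ⟨fun h => ?_, hL.idxOf_lt_idxOf hR hq hp⟩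
    rcases htot q hq p hp with h' | rfl | h'
    · exact h'
    · exact absurd h (lt_irrefl _)
    · exact absurd (hL.idxOf_lt_idxOf hR hp hq h') (by omega)
  unfold DesWord
  simp only [Finset.mem_filter, List.mem_toFinset, List.mem_map]
  constructor
  · rintro ⟨⟨p, hp, rfl⟩, ⟨q, hq, hq'⟩, hlt⟩
    rw [← hq'] at hlt
    exact ⟨p, hp, q, hq, rfl, hq', (key p hp q hq).1 hlt⟩
  · rintro ⟨p, hp, q, hq, rfl, hq', hqp⟩
    exact ⟨⟨p, hp, rfl⟩, ⟨q, hq, hq'⟩, hq' ▸ (key p hp q hq).2 hqp⟩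

theorem le_maxPart_of_mem {α : List ℕ} {x : ℕ} (hx : x ∈ α) : x ≤ maxPart α := by
  unfold maxPart
  induction α with
  | nil => simp at hx
  | cons a t ih =>
    rcases List.mem_cons.1 hx with rfl | h
    · exact le_max_left _ _
    · exact (ih h).trans (le_max_right _ _)

theorem part_le_maxPart {α : List ℕ} {r : ℕ} (h1 : 1 ≤ r) (h2 : r ≤ α.length) :
    part α r ≤ maxPart α := by
  unfold part
  rw [List.getD_eq_getElem α 0 (by omega)]
  exact le_maxPart_of_mem (List.getElem_mem _)

theorem mem_cd_iff {α : List ℕ} {c r : ℕ} :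
    (c, r) ∈ cd α ↔ 1 ≤ c ∧ c ≤ part α r ∧ 1 ≤ r ∧ r ≤ α.length := by
  unfold cd
  simp only [Finset.mem_filter, Finset.mem_product, Finset.mem_Icc]
  constructor
  · rintro ⟨⟨⟨h1, _⟩, h3, h4⟩, h5⟩
    exact ⟨h1, h5, h3, h4⟩
  · rintro ⟨h1, h2, h3, h4⟩
    exact ⟨⟨⟨h1, h2.trans (part_le_maxPart h3 h4)⟩, h3, h4⟩, h2⟩

theorem one_le_fst_of_mem_cd {α : List ℕ} {p : ℕ × ℕ} (hp : p ∈ cd α) : 1 ≤ p.1 :=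
  (mem_cd_iff.1 hp).1

def colBoxes (α : List ℕ) (i : ℕ) : List (ℕ × ℕ) :=
  ((List.range α.length).filter fun j => decide (i ≤ part α (j + 1))).map fun j => (i, j + 1)

def boxListC (α : List ℕ) : List (ℕ × ℕ) :=
  ((List.range (maxPart α)).map fun i => colBoxes α (i + 1)).flatten

def boxListY (α : List ℕ) : List (ℕ × ℕ) :=
  (colBoxes α 1).reverse ++ ((List.range (maxPart α - 1)).map fun i => colBoxes α (i + 2)).flatten

theorem wC_eq_map (α : List ℕ) (T : ℕ × ℕ → ℕ) : wC α T = (boxListC α).map T := by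
  simp only [wC, boxListC, colList, colBoxes, List.map_flatten, List.map_map, Function.comp_def]

theorem wY_eq_map (α : List ℕ) (T : ℕ × ℕ → ℕ) : wY α T = (boxListY α).map T := by
  simp only [wY, boxListY, colList, colBoxes, List.map_append, List.map_reverse,
    List.map_flatten, List.map_map, Function.comp_def]

theorem mem_colBoxes {α : List ℕ} {i : ℕ} (hi : 1 ≤ i) {p : ℕ × ℕ} :
    p ∈ colBoxes α i ↔ p.1 = i ∧ p ∈ cd α := by
  obtain ⟨c, r⟩ := p
  simp only [colBoxes, List.mem_map, List.mem_filter, List.mem_range, decide_eq_true_eq,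
    Prod.mk.injEq, mem_cd_iff]
  constructor
  · rintro ⟨j, ⟨hj, hle⟩, rfl, rfl⟩
    exact ⟨rfl, hi, hle, by omega, hj⟩
  · rintro ⟨rfl, -, h2, h3, h4⟩
    exact ⟨r - 1, ⟨by omega, by rwa [Nat.sub_add_cancel h3]⟩, rfl, by omega⟩

theorem pairwise_colBoxes (α : List ℕ) (i : ℕ) :
    (colBoxes α i).Pairwise fun p q => p.1 = i ∧ q.1 = i ∧ p.2 < q.2 := by
  unfold colBoxes
  rw [List.pairwise_map]
  exact (List.pairwise_lt_range.filter _).imp fun h => ⟨rfl, rfl, by omega⟩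

theorem lt_maxPart_of_mem_cd {α : List ℕ} {p : ℕ × ℕ} (hp : p ∈ cd α) : p.1 - 1 < maxPart α := by
  obtain ⟨c, r⟩ := p
  obtain ⟨h1, h2, h3, h4⟩ := mem_cd_iff.1 hp
  have := part_le_maxPart h3 h4
  simp only
  omega

theorem mem_boxListC {α : List ℕ} {p : ℕ × ℕ} : p ∈ boxListC α ↔ p ∈ cd α := by
  simp only [boxListC, List.mem_flatten, List.mem_map, List.mem_range]
  constructor
  · rintro ⟨_, ⟨i, -, rfl⟩, hp⟩
    exact ((mem_colBoxes (by omega)).1 hp).2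
  · intro hp
    have h1 := one_le_fst_of_mem_cd hp
    exact ⟨_, ⟨p.1 - 1, lt_maxPart_of_mem_cd hp, rfl⟩,
      (mem_colBoxes (by omega)).2 ⟨by omega, hp⟩⟩

theorem mem_boxListY {α : List ℕ} {p : ℕ × ℕ} : p ∈ boxListY α ↔ p ∈ cd α := by
  simp only [boxListY, List.mem_append, List.mem_reverse, List.mem_flatten, List.mem_map,
    List.mem_range]
  constructor
  · rintro (hp | ⟨_, ⟨i, -, rfl⟩, hp⟩)
    · exact ((mem_colBoxes le_rfl).1 hp).2
    · exact ((mem_colBoxes (by omega)).1 hp).2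
  · intro hp
    have h1 := one_le_fst_of_mem_cd hp
    have h2 := lt_maxPart_of_mem_cd hp
    by_cases hc : p.1 = 1
    · exact Or.inl ((mem_colBoxes le_rfl).2 ⟨hc, hp⟩)
    · exact Or.inr ⟨_, ⟨p.1 - 2, by omega, rfl⟩, (mem_colBoxes (by omega)).2 ⟨by omega, hp⟩⟩

def ReadsBeforeC (p q : ℕ × ℕ) : Prop := p.1 < q.1 ∨ (p.1 = q.1 ∧ p.2 < q.2)

def ReadsBeforeY (p q : ℕ × ℕ) : Prop :=
  (p.1 = 1 ∧ q.1 = 1 ∧ q.2 < p.2) ∨ (p.1 = 1 ∧ 2 ≤ q.1) ∨ (2 ≤ p.1 ∧ 2 ≤ q.1 ∧ ReadsBeforeC p q)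

theorem pairwise_boxListC (α : List ℕ) : (boxListC α).Pairwise ReadsBeforeC := by
  unfold boxListC
  rw [List.pairwise_flatten, List.pairwise_map]
  refine ⟨?_, List.pairwise_lt_range.imp ?_⟩
  · simp only [List.mem_map]
    rintro _ ⟨i, -, rfl⟩
    exact (pairwise_colBoxes α _).imp fun ⟨h1, h2, h3⟩ => Or.inr ⟨by omega, h3⟩
  · intro i i' hlt x hx y hy
    rw [mem_colBoxes (by omega)] at hx hy
    exact Or.inl (by omega)

theorem pairwise_boxListY (α : List ℕ) : (boxListY α).Pairwise ReadsBeforeY := by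
  unfold boxListY
  rw [List.pairwise_append, List.pairwise_reverse, List.pairwise_flatten, List.pairwise_map]
  refine ⟨(pairwise_colBoxes α 1).imp fun ⟨h1, h2, h3⟩ => Or.inl ⟨h2, h1, h3⟩,
    ⟨?_, List.pairwise_lt_range.imp ?_⟩, ?_⟩
  · simp only [List.mem_map]
    rintro _ ⟨i, -, rfl⟩
    exact (pairwise_colBoxes α _).imp
      fun ⟨h1, h2, h3⟩ => Or.inr (Or.inr ⟨by omega, by omega, Or.inr ⟨by omega, h3⟩⟩)
  · intro i i' hlt x hx y hy
    rw [mem_colBoxes (by omega)] at hx hy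
    exact Or.inr (Or.inr ⟨by omega, by omega, Or.inl (by omega)⟩)
  · simp only [List.mem_reverse, List.mem_flatten, List.mem_map]
    rintro a ha b ⟨_, ⟨i, -, rfl⟩, hb⟩
    rw [mem_colBoxes le_rfl] at ha
    rw [mem_colBoxes (by omega)] at hb
    exact Or.inr (Or.inl ⟨ha.1, by omega⟩)

theorem mem_DesWord_wC_iff {α : List ℕ} {T : ℕ × ℕ → ℕ} (hT : Set.InjOn T (cd α)) {i : ℕ} :
    i ∈ DesWord (wC α T) ↔
      ∃ p ∈ cd α, ∃ q ∈ cd α, T p = i ∧ T q = i + 1 ∧ ReadsBeforeC q p := by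
  rw [wC_eq_map, mem_DesWord_map_iff (by unfold ReadsBeforeC; omega) (pairwise_boxListC α)
    (fun x _ y _ => by rw [Prod.ext_iff]; unfold ReadsBeforeC; omega)
    (fun x hx y hy => hT (mem_boxListC.1 hx) (mem_boxListC.1 hy))]
  simp only [mem_boxListC]

theorem mem_DesWord_wY_iff {α : List ℕ} {T : ℕ × ℕ → ℕ} (hT : Set.InjOn T (cd α)) {i : ℕ} :
    i ∈ DesWord (wY α T) ↔
      ∃ p ∈ cd α, ∃ q ∈ cd α, T p = i ∧ T q = i + 1 ∧ ReadsBeforeY q p := by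
  rw [wY_eq_map, mem_DesWord_map_iff (by unfold ReadsBeforeY ReadsBeforeC; omega)
    (pairwise_boxListY α) (fun x hx y hy => ?_)
    (fun x hx y hy => hT (mem_boxListY.1 hx) (mem_boxListY.1 hy))]
  · simp only [mem_boxListY]
  · have := one_le_fst_of_mem_cd (mem_boxListY.1 hx)
    have := one_le_fst_of_mem_cd (mem_boxListY.1 hy)
    rw [Prod.ext_iff]
    unfold ReadsBeforeY ReadsBeforeC
    omega

/-! ### Row lengths of the growing shapes -/

theorem IsStandardFilling.injOn {α : List ℕ} {T : ℕ × ℕ → ℕ} (h : IsStandardFilling α T) :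
    Set.InjOn T (cd α) :=
  h.1.injOn

theorem IsStandardFilling.mem_Icc {α : List ℕ} {T : ℕ × ℕ → ℕ} (h : IsStandardFilling α T)
    {p : ℕ × ℕ} (hp : p ∈ cd α) : 1 ≤ T p ∧ T p ≤ α.sum :=
  h.1.mapsTo hp

theorem part_eq_zero_of_length_lt {β : List ℕ} {r : ℕ} (h : β.length < r) : part β r = 0 :=
  List.getD_eq_default _ _ (by omega)

theorem getD_eq_part (β : List ℕ) (i : ℕ) : β.getD i 0 = part β (i + 1) := rfl

theorem getElem_eq_part {β : List ℕ} {i : ℕ} (h : i < β.length) : β[i] = part β (i + 1) :=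
  (List.getD_eq_getElem _ _ h).symm

def rowLen (α : List ℕ) (T : ℕ × ℕ → ℕ) (r k : ℕ) : ℕ :=
  ((cd α).filter fun p => p.2 = r ∧ T p ≤ k).card

section RowLen

variable {α : List ℕ} {T : ℕ × ℕ → ℕ}

theorem rowLen_eq_card_filter_Icc {r k N : ℕ} (hN : part α r ≤ N) :
    rowLen α T r k = ((Finset.Icc 1 N).filter fun c => (c, r) ∈ cd α ∧ T (c, r) ≤ k).card := by
  unfold rowLen
  refine Finset.card_bij (fun p _ => p.1) ?_ ?_ ?_
  · rintro ⟨c, r'⟩ hp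
    simp only [Finset.mem_filter] at hp
    obtain ⟨hcd, rfl, hT⟩ := hp
    have := mem_cd_iff.1 hcd
    simp only [Finset.mem_filter, Finset.mem_Icc]
    exact ⟨⟨this.1, by omega⟩, hcd, hT⟩
  · rintro ⟨c, r₁⟩ hp ⟨c', r₂⟩ hq rfl
    simp only [Finset.mem_filter] at hp hq
    rw [hp.2.1, hq.2.1]
  · intro c hc
    simp only [Finset.mem_filter] at hc
    exact ⟨(c, r), by simpa only [Finset.mem_filter, true_and] using hc.2, rfl⟩

theorem rowLen_le_part {r k : ℕ} : rowLen α T r k ≤ part α r := by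
  rw [rowLen_eq_card_filter_Icc le_rfl]
  exact (Finset.card_filter_le _ _).trans (by simp)

theorem rowLen_eq_zero_of_length_lt {r k : ℕ} (h : α.length < r) : rowLen α T r k = 0 := by
  have := rowLen_le_part (α := α) (T := T) (r := r) (k := k)
  rw [part_eq_zero_of_length_lt h] at this
  omega

theorem rowLen_zero_left {k : ℕ} : rowLen α T 0 k = 0 := by
  rw [rowLen_eq_card_filter_Icc le_rfl, Finset.card_eq_zero, Finset.filter_eq_empty_iff]
  intro c _ h
  exact absurd (mem_cd_iff.1 h.1).2.2.1 (by omega)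

theorem rowLen_mono (α : List ℕ) (T : ℕ × ℕ → ℕ) (r : ℕ) {k k' : ℕ} (h : k ≤ k') :
    rowLen α T r k ≤ rowLen α T r k' :=
  Finset.card_le_card fun _ hp => by
    simp only [Finset.mem_filter] at hp ⊢
    exact ⟨hp.1, hp.2.1, hp.2.2.trans h⟩

theorem RowsIncrease.le_of_le (hRI : RowsIncrease α T) {c c' r : ℕ} (h1 : 1 ≤ c')
    (h2 : c' ≤ c) (hc : (c, r) ∈ cd α) : T (c', r) ≤ T (c, r) := by
  induction c, h2 using Nat.le_induction with
  | base => exact le_rfl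
  | succ c hle ih =>
    obtain ⟨-, h2, h3, h4⟩ := mem_cd_iff.1 hc
    have hc' : (c, r) ∈ cd α := mem_cd_iff.2 ⟨by omega, by omega, h3, h4⟩
    exact (ih hc').trans (hRI c r hc' hc).le

theorem le_rowLen_iff (hRI : RowsIncrease α T) {c r k : ℕ} (hc : (c, r) ∈ cd α) :
    T (c, r) ≤ k ↔ c ≤ rowLen α T r k := by
  obtain ⟨hc1, hc2, hr1, hr2⟩ := mem_cd_iff.1 hc
  set S := (Finset.Icc 1 (part α r)).filter fun c => (c, r) ∈ cd α ∧ T (c, r) ≤ k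
  have hdown : ∀ x ∈ S, ∀ y, 1 ≤ y → y ≤ x → y ∈ S := by
    intro x hx y hy hyx
    simp only [S, Finset.mem_filter, Finset.mem_Icc] at hx ⊢
    have hy' : (y, r) ∈ cd α := mem_cd_iff.2 ⟨hy, by omega, hr1, hr2⟩
    exact ⟨⟨hy, by omega⟩, hy', (hRI.le_of_le hy hyx hx.2.1).trans hx.2.2⟩
  have hS : S = Finset.Icc 1 S.card := by
    rcases S.eq_empty_or_nonempty with hempty | hne
    · simp [hempty]
    · have hSI : S = Finset.Icc 1 (S.max' hne) := by
        ext x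
        rw [Finset.mem_Icc]
        refine ⟨fun hx => ⟨?_, S.le_max' x hx⟩, fun hx => hdown _ (S.max'_mem hne) x hx.1 hx.2⟩
        simp only [S, Finset.mem_filter, Finset.mem_Icc] at hx
        exact hx.1.1
      conv_rhs => rw [hSI]
      rwa [Nat.card_Icc, Nat.add_sub_cancel]
  have hmem := congrArg (c ∈ ·) hS
  simp only [S, Finset.mem_filter, Finset.mem_Icc, eq_iff_iff] at hmem
  rw [rowLen_eq_card_filter_Icc le_rfl]
  tauto

theorem rowLen_of_mem_cd (hRI : RowsIncrease α T) {c r : ℕ} (hq : (c, r) ∈ cd α) :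
    rowLen α T r (T (c, r)) = c := by
  have h1 : c ≤ rowLen α T r (T (c, r)) := (le_rowLen_iff hRI hq).1 le_rfl
  by_contra hne
  obtain ⟨hc1, -, hr1, hr2⟩ := mem_cd_iff.1 hq
  have hpart := rowLen_le_part (α := α) (T := T) (r := r) (k := T (c, r))
  have hcd1 : (c + 1, r) ∈ cd α := mem_cd_iff.2 ⟨by omega, by omega, hr1, hr2⟩
  have := (le_rowLen_iff hRI hcd1 (k := T (c, r))).2 (by omega)
  have := hRI c r hq hcd1
  omega

theorem rowLen_eq_part (hSF : IsStandardFilling α T) {r : ℕ} (h1 : 1 ≤ r) (h2 : r ≤ α.length) :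
    rowLen α T r α.sum = part α r := by
  rw [rowLen_eq_card_filter_Icc le_rfl, Finset.filter_true_of_mem, Nat.card_Icc,
    Nat.add_sub_cancel]
  intro c hc
  rw [Finset.mem_Icc] at hc
  have hcd : (c, r) ∈ cd α := mem_cd_iff.2 ⟨hc.1, hc.2, h1, h2⟩
  exact ⟨hcd, (hSF.mem_Icc hcd).2⟩

theorem rowLen_succ_of_ne (hT : Set.InjOn T (cd α)) {q : ℕ × ℕ} (hq : q ∈ cd α) {m r : ℕ}
    (hTq : T q = m + 1) (hr : q.2 ≠ r) : rowLen α T r (m + 1) = rowLen α T r m := by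
  unfold rowLen
  congr 1
  refine Finset.filter_congr fun p hp => ⟨fun ⟨hpr, hT'⟩ => ⟨hpr, ?_⟩, fun ⟨hpr, hT'⟩ => ⟨hpr, by omega⟩⟩
  by_contra hlt
  exact hr (hpr ▸ congrArg Prod.snd (hT hq hp (by omega)))

theorem rowLen_succ_le (hT : Set.InjOn T (cd α)) (r m : ℕ) :
    rowLen α T r (m + 1) ≤ rowLen α T r m + 1 := by
  unfold rowLen
  have hsplit : ((cd α).filter fun p => p.2 = r ∧ T p ≤ m + 1) ⊆
      ((cd α).filter fun p => p.2 = r ∧ T p ≤ m) ∪ (cd α).filter fun p => T p = m + 1 := by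
    intro p hp
    simp only [Finset.mem_filter, Finset.mem_union] at hp ⊢
    obtain ⟨hcd, hr, hle⟩ := hp
    rcases Nat.lt_or_ge (T p) (m + 1) with h | h
    · exact Or.inl ⟨hcd, hr, by omega⟩
    · exact Or.inr ⟨hcd, by omega⟩
  have hone : ((cd α).filter fun p => T p = m + 1).card ≤ 1 :=
    Finset.card_le_one.2 fun p hp q hq => by
      simp only [Finset.mem_filter] at hp hq
      exact hT hp.1 hq.1 (hp.2.trans hq.2.symm)
  exact (Finset.card_le_card hsplit).trans ((Finset.card_union_le _ _).trans (by omega))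

theorem card_filter_le_eq (hSF : IsStandardFilling α T) {k : ℕ} (hk : k ≤ α.sum) :
    ((cd α).filter fun p => T p ≤ k).card = k := by
  have hbij : Set.BijOn T ↑((cd α).filter fun p => T p ≤ k) ↑(Finset.Icc 1 k) := by
    refine ⟨fun p hp => ?_, hSF.injOn.mono fun p hp => (Finset.mem_filter.1 hp).1, fun v hv => ?_⟩
    · rw [Finset.coe_filter] at hp
      exact Finset.mem_Icc.2 ⟨(hSF.mem_Icc hp.1).1, hp.2⟩
    · rw [Finset.coe_Icc] at hv
      obtain ⟨p, hp, rfl⟩ := hSF.1.surjOn ⟨hv.1, hv.2.trans hk⟩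
      exact ⟨p, by simpa [Finset.coe_filter] using ⟨hp, hv.2⟩, rfl⟩
  rw [Finset.card_nbij T hbij.mapsTo hbij.injOn hbij.surjOn, Nat.card_Icc, Nat.add_sub_cancel]

theorem sum_rowLen (hSF : IsStandardFilling α T) {k : ℕ} (hk : k ≤ α.sum) :
    ∑ r ∈ Finset.Icc 1 α.length, rowLen α T r k = k := by
  conv_rhs => rw [← card_filter_le_eq hSF hk]
  rw [Finset.card_eq_sum_card_fiberwise (f := Prod.snd) (t := Finset.Icc 1 α.length)]
  · refine Finset.sum_congr rfl fun r _ => ?_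
    unfold rowLen
    rw [Finset.filter_filter]
    simp only [and_comm]
  · intro p hp
    obtain ⟨c, r⟩ := p
    have := mem_cd_iff.1 (Finset.mem_filter.1 hp).1
    exact Finset.mem_Icc.2 ⟨this.2.2.1, this.2.2.2⟩

end RowLen

/-! ### The peak condition through row lengths -/

theorem sum_Icc_one_eq_sum_fin (g : ℕ → ℕ) (M : ℕ) :
    ∑ r ∈ Finset.Icc 1 M, g r = ∑ i : Fin M, g (i + 1) := by
  rw [Fin.sum_univ_eq_sum_range (fun i => g (i + 1)), Finset.range_eq_Ico, Finset.sum_Ico_add' g,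
    zero_add, Finset.Ico_add_one_right_eq_Icc]

def RowPeakCond (α : List ℕ) (T : ℕ × ℕ → ℕ) : Prop :=
  ∀ k, 1 ≤ k → k ≤ α.sum → ∀ r, 1 ≤ r →
    (∃ r', r < r' ∧ 1 ≤ rowLen α T r' k) → 2 ≤ rowLen α T r k

section PeakCond

variable {α : List ℕ} {T : ℕ × ℕ → ℕ}

theorem rowLen_eq_part_of_filter_eq {β : List ℕ} {k : ℕ}
    (h : (cd α).filter (fun p => T p ≤ k) = cd β) {r : ℕ} (hr : 1 ≤ r) :
    rowLen α T r k = part β r := by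
  have hmem : ∀ c, ((c, r) ∈ cd α ∧ T (c, r) ≤ k) ↔ (c, r) ∈ cd β := fun c => by
    rw [← h, Finset.mem_filter]
  rw [rowLen_eq_card_filter_Icc (N := part α r + part β r) (by omega)]
  simp only [hmem]
  by_cases hrβ : r ≤ β.length
  · have hrow : ((Finset.Icc 1 (part α r + part β r)).filter fun c => (c, r) ∈ cd β) =
        Finset.Icc 1 (part β r) := by
      ext c
      simp only [Finset.mem_filter, Finset.mem_Icc, mem_cd_iff]
      omega
    rw [hrow, Nat.card_Icc, Nat.add_sub_cancel]
  · rw [part_eq_zero_of_length_lt (β := β) (by omega), Finset.card_eq_zero,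
      Finset.filter_eq_empty_iff]
    exact fun c _ hc => hrβ (mem_cd_iff.1 hc).2.2.2

theorem filter_le_eq_cd_of_rowLen (hRI : RowsIncrease α T) {β : List ℕ} {k : ℕ}
    (h : ∀ r, 1 ≤ r → rowLen α T r k = part β r) :
    (cd α).filter (fun p => T p ≤ k) = cd β := by
  ext ⟨c, r⟩
  rw [Finset.mem_filter, mem_cd_iff (α := β)]
  constructor
  · rintro ⟨hcd, hT⟩
    obtain ⟨h1, -, h3, -⟩ := mem_cd_iff.1 hcd
    have hc := (le_rowLen_iff hRI hcd).1 hT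
    rw [h r h3] at hc
    refine ⟨h1, hc, h3, ?_⟩
    by_contra hrβ
    rw [part_eq_zero_of_length_lt (by omega)] at hc
    omega
  · rintro ⟨h1, h2, h3, -⟩
    rw [← h r h3] at h2
    have hpart := rowLen_le_part (α := α) (T := T) (r := r) (k := k)
    have hrα : r ≤ α.length := by
      by_contra hrα
      rw [rowLen_eq_zero_of_length_lt (by omega)] at h2
      omega
    have hcd : (c, r) ∈ cd α := mem_cd_iff.2 ⟨h1, by omega, h3, hrα⟩
    exact ⟨hcd, (le_rowLen_iff hRI hcd).2 h2⟩

theorem PeakCond.rowPeakCond (hpc : PeakCond α T) : RowPeakCond α T := by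
  rintro k hk1 hk2 r hr ⟨r', hrr', hpos⟩
  obtain ⟨β, ⟨-, hβpeak⟩, hβ⟩ := hpc k hk1 hk2
  rw [rowLen_eq_part_of_filter_eq hβ hr]
  rw [rowLen_eq_part_of_filter_eq hβ (by omega)] at hpos
  have hr'β : r' ≤ β.length := by
    by_contra h
    rw [part_eq_zero_of_length_lt (by omega)] at hpos
    omega
  have := hβpeak (r - 1) (by omega)
  rw [getD_eq_part, Nat.sub_add_cancel hr] at this
  exact this

theorem exists_nonempty_rows_eq_Icc (hSF : IsStandardFilling α T) {k : ℕ} (hk1 : 1 ≤ k)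
    (hk2 : k ≤ α.sum) (hrpc : RowPeakCond α T) :
    ∃ M ≤ α.length, ∀ r, 1 ≤ r → (1 ≤ rowLen α T r k ↔ r ≤ M) := by
  classical
  set M := Nat.findGreatest (fun r => 1 ≤ rowLen α T r k) α.length
  obtain ⟨r₀, hr₀, hr₀pos⟩ :=
    Finset.exists_ne_zero_of_sum_ne_zero ((sum_rowLen hSF hk2).trans_ne (by omega))
  have hMpos : 1 ≤ rowLen α T M k :=
    Nat.findGreatest_spec (P := fun r => 1 ≤ rowLen α T r k) (Finset.mem_Icc.1 hr₀).2
      (by omega)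
  refine ⟨M, Nat.findGreatest_le _, fun r hr => ⟨fun hpos => ?_, fun hrM => ?_⟩⟩
  · by_contra hMr
    by_cases hrα : r ≤ α.length
    · exact hMr (Nat.le_findGreatest (P := fun r => 1 ≤ rowLen α T r k) hrα hpos)
    · rw [rowLen_eq_zero_of_length_lt (by omega)] at hpos
      omega
  · rcases hrM.lt_or_eq with h | rfl
    · exact (hrpc k hk1 hk2 r hr ⟨M, h, hMpos⟩).trans' (by omega)
    · exact hMpos

theorem exists_peakComposition_rowLen (hSF : IsStandardFilling α T) (hrpc : RowPeakCond α T)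
    {k : ℕ} (hk1 : 1 ≤ k) (hk2 : k ≤ α.sum) :
    ∃ β, IsPeakComposition k β ∧ ∀ r, 1 ≤ r → rowLen α T r k = part β r := by
  obtain ⟨M, hMle, hM⟩ := exists_nonempty_rows_eq_Icc hSF hk1 hk2 hrpc
  set β := List.ofFn fun i : Fin M => rowLen α T (i + 1) k
  have hpart : ∀ r, 1 ≤ r → rowLen α T r k = part β r := by
    intro r hr
    by_cases hrM : r ≤ M
    · rw [part, List.getD_eq_getElem _ _ (by simp only [β, List.length_ofFn]; omega),
        List.getElem_ofFn, Nat.sub_add_cancel hr]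
    · have := (hM r hr).not.2 hrM
      rw [part_eq_zero_of_length_lt (by simp only [β, List.length_ofFn]; omega)]
      omega
  refine ⟨β, ⟨⟨?_, ?_⟩, ?_⟩, hpart⟩
  · simp only [β, List.mem_ofFn]
    rintro _ ⟨i, rfl⟩
    exact (hM (i + 1) (by omega)).2 (by omega)
  · rw [List.sum_ofFn, ← sum_Icc_one_eq_sum_fin (fun r => rowLen α T r k)]
    refine (Finset.sum_subset (Finset.Icc_subset_Icc_right hMle) fun r hr hrM => ?_).trans
      (sum_rowLen hSF hk2)
    simp only [Finset.mem_Icc] at hr hrM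
    have := (hM r hr.1).not.2 (by omega)
    omega
  · intro i hi
    simp only [β, List.length_ofFn] at hi
    rw [getD_eq_part, ← hpart (i + 1) (by omega)]
    exact hrpc k hk1 hk2 (i + 1) (by omega) ⟨M, hi, (hM M (by omega)).2 le_rfl⟩

theorem peakCond_iff_rowPeakCond (hSF : IsStandardFilling α T) (hRI : RowsIncrease α T) :
    PeakCond α T ↔ RowPeakCond α T := by
  refine ⟨PeakCond.rowPeakCond, fun hrpc k hk1 hk2 => ?_⟩
  obtain ⟨β, hβ, hrow⟩ := exists_peakComposition_rowLen hSF hrpc hk1 hk2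
  exact ⟨β, hβ, filter_le_eq_cd_of_rowLen hRI hrow⟩

end PeakCond

/-! ### Exchanging two parts -/

theorem exists_perm_get_eq_getD {l α : List ℕ} (hnd : l.Nodup) (hperm : α.Perm l) :
    ∃ σ : Equiv.Perm (Fin l.length), ∀ k, l.get k = α.getD (σ k : ℕ) 0 := by
  have hlen : α.length = l.length := hperm.length_eq
  have hlt : ∀ k : Fin l.length, α.idxOf (l.get k) < l.length := fun k => by
    rw [← hlen]
    exact List.idxOf_lt_length_of_mem (hperm.mem_iff.2 (List.get_mem _ _))
  set σ₀ : Fin l.length → Fin l.length := fun k => ⟨α.idxOf (l.get k), hlt k⟩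
  have hval : ∀ k, α.getD (σ₀ k : ℕ) 0 = l.get k := fun k => by
    have hk : α.idxOf (l.get k) < α.length := hlen.symm ▸ hlt k
    rw [List.getD_eq_getElem _ _ hk]
    exact List.getElem_idxOf hk
  have hinj : Function.Injective σ₀ := fun k k' h => by
    have := congrArg (fun i : Fin l.length => α.getD (i : ℕ) 0) h
    simp only [hval] at this
    exact hnd.get_inj_iff.1 this
  exact ⟨Equiv.ofBijective σ₀ (Finite.injective_iff_bijective.1 hinj), fun k => (hval k).symm⟩

def swapRow (j j' r : ℕ) : ℕ := if r = j then j' else if r = j' then j else r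

theorem swapRow_swapRow (j j' r : ℕ) : swapRow j j' (swapRow j j' r) = r := by
  unfold swapRow
  split_ifs <;> omega

theorem swapRow_of_ne {j j' r : ℕ} (h1 : r ≠ j) (h2 : r ≠ j') : swapRow j j' r = r := by
  rw [swapRow, if_neg h1, if_neg h2]

theorem swapRow_eq_or_eq {j j' r : ℕ} (h : r = j ∨ r = j') :
    swapRow j j' r = j ∨ swapRow j j' r = j' := by
  unfold swapRow
  split_ifs <;> omega

theorem swapRow_mem_Icc_iff {j j' n r : ℕ} (hj : 1 ≤ j) (hjn : j ≤ n) (hj' : 1 ≤ j')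
    (hj'n : j' ≤ n) : (1 ≤ swapRow j j' r ∧ swapRow j j' r ≤ n) ↔ (1 ≤ r ∧ r ≤ n) := by
  unfold swapRow
  split_ifs <;> omega

theorem swapRow_sub_one {j j' n : ℕ} (hj : 1 ≤ j) (hjn : j ≤ n) (hj' : 1 ≤ j') (hj'n : j' ≤ n)
    (x : Fin n) : swapRow j j' (x + 1) - 1 =
      Equiv.swap (⟨j - 1, by omega⟩ : Fin n) ⟨j' - 1, by omega⟩ x := by
  rw [Equiv.swap_apply_def]
  unfold swapRow
  split_ifs <;> simp_all [Fin.ext_iff] <;> omega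

def swapParts (α : List ℕ) (j j' : ℕ) : List ℕ :=
  List.ofFn fun i : Fin α.length => part α (swapRow j j' (i + 1))

section SwapParts

variable {α : List ℕ} {j j' : ℕ}

theorem length_swapParts : (swapParts α j j').length = α.length := List.length_ofFn

theorem part_swapParts {r : ℕ} (h1 : 1 ≤ r) (h2 : r ≤ α.length) :
    part (swapParts α j j') r = part α (swapRow j j' r) := by
  rw [part, swapParts, List.getD_eq_getElem _ _ (by rw [List.length_ofFn]; omega),
    List.getElem_ofFn, Nat.sub_add_cancel h1]

variable (hj : 1 ≤ j) (hjn : j ≤ α.length) (hj' : 1 ≤ j') (hj'n : j' ≤ α.length)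
include hj hjn hj' hj'n

theorem swapParts_eq_ofFn : swapParts α j j' =
    List.ofFn (α.get ∘ Equiv.swap (⟨j - 1, by omega⟩ : Fin α.length) ⟨j' - 1, by omega⟩) := by
  unfold swapParts
  congr 1
  funext i
  rw [Function.comp_apply, List.get_eq_getElem, getElem_eq_part,
    ← swapRow_sub_one hj hjn hj' hj'n, Nat.sub_add_cancel]
  have := (swapRow_mem_Icc_iff hj hjn hj' hj'n (r := i + 1)).2 ⟨by omega, by omega⟩
  exact this.1

theorem swapParts_perm : (swapParts α j j').Perm α := by
  rw [swapParts_eq_ofFn hj hjn hj' hj'n]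
  simpa only [List.ofFn_get] using Equiv.Perm.ofFn_comp_perm _ α.get

theorem swapParts_swapParts : swapParts (swapParts α j j') j j' = α := by
  apply List.ext_getElem (by rw [length_swapParts, length_swapParts])
  intro i h1 h2
  have hb := (swapRow_mem_Icc_iff hj hjn hj' hj'n (r := i + 1)).2 ⟨by omega, h2⟩
  rw [getElem_eq_part, getElem_eq_part, part_swapParts (by omega) (by rw [length_swapParts]; omega),
    part_swapParts hb.1 hb.2, swapRow_swapRow]

theorem swapParts_ne (hnd : α.Nodup) (hne : j ≠ j') : swapParts α j j' ≠ α := by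
  intro h
  have hp := part_swapParts (α := α) (j := j) (j' := j') hj hjn
  rw [h, swapRow, if_pos rfl, part, part, List.getD_eq_getElem _ _ (by omega),
    List.getD_eq_getElem _ _ (by omega)] at hp
  have := (hnd.getElem_inj_iff).1 hp
  omega

theorem sign_swapParts {l : List ℕ} (ε : List ℕ → ℤ)
    (hε : ∀ α : List ℕ, α.Perm l → ∀ σ : Equiv.Perm (Fin l.length),
      (∀ k : Fin l.length, l.get k = α.getD (σ k : ℕ) 0) → ε α = (Equiv.Perm.sign σ : ℤ))
    (hnd : l.Nodup) (hperm : α.Perm l) (hne : j ≠ j') :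
    ε (swapParts α j j') = -ε α := by
  obtain ⟨σ, hσ⟩ := exists_perm_get_eq_getD hnd hperm
  have hlen : α.length = l.length := hperm.length_eq
  set a : Fin l.length := ⟨j - 1, by omega⟩
  set b : Fin l.length := ⟨j' - 1, by omega⟩
  have hab : a ≠ b := by
    simp only [a, b, ne_eq, Fin.ext_iff]
    omega
  have hσ' : ∀ k, l.get k = (swapParts α j j').getD ((σ.trans (Equiv.swap a b)) k : ℕ) 0 := by
    intro k
    have hk := ((σ.trans (Equiv.swap a b)) k).isLt
    rw [getD_eq_part, part_swapParts (by omega) (by omega)]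
    change l.get k = α.getD (swapRow j j' _ - 1) 0
    rw [swapRow_sub_one (n := l.length) hj (by omega) hj' (by omega), Equiv.trans_apply,
      Equiv.swap_apply_self]
    exact hσ k
  rw [hε α hperm σ hσ, hε _ ((swapParts_perm hj hjn hj' hj'n).trans hperm) _ hσ',
    Equiv.Perm.sign_trans, Equiv.Perm.sign_swap hab]
  simp

end SwapParts

/-! ### Collisions and the swap -/

open scoped Classical

def CollidesAbove (α : List ℕ) (T : ℕ × ℕ → ℕ) (k r : ℕ) : Prop :=
  ∃ r', r < r' ∧ 1 ≤ rowLen α T r' k ∧ rowLen α T r k = rowLen α T r' k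

def IsCollisionTime (α : List ℕ) (T : ℕ × ℕ → ℕ) (k : ℕ) : Prop := ∃ r, CollidesAbove α T k r

def HasCollision (α : List ℕ) (T : ℕ × ℕ → ℕ) : Prop := ∃ k ≤ α.sum, IsCollisionTime α T k

noncomputable def collisionTime (α : List ℕ) (T : ℕ × ℕ → ℕ) : ℕ :=
  Nat.findGreatest (IsCollisionTime α T) α.sum

noncomputable def lowRow (α : List ℕ) (T : ℕ × ℕ → ℕ) : ℕ :=
  if h : IsCollisionTime α T (collisionTime α T) then Nat.find h else 0

noncomputable def highRow (α : List ℕ) (T : ℕ × ℕ → ℕ) : ℕ :=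
  if h : CollidesAbove α T (collisionTime α T) (lowRow α T) then Nat.find h else 0

noncomputable def collisionLen (α : List ℕ) (T : ℕ × ℕ → ℕ) : ℕ :=
  rowLen α T (lowRow α T) (collisionTime α T)

noncomputable def swapBox (α : List ℕ) (T : ℕ × ℕ → ℕ) (p : ℕ × ℕ) : ℕ × ℕ :=
  if p.1 ≤ collisionLen α T then p else (p.1, swapRow (lowRow α T) (highRow α T) p.2)

noncomputable def swapShape (α : List ℕ) (T : ℕ × ℕ → ℕ) : List ℕ :=
  swapParts α (lowRow α T) (highRow α T)

noncomputable def swapFilling (α : List ℕ) (T : ℕ × ℕ → ℕ) : ℕ × ℕ → ℕ :=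
  fun p => T (swapBox α T p)

section Collision

variable {α : List ℕ} {T : ℕ × ℕ → ℕ}

theorem isCollisionTime_iff_ne {k : ℕ} : IsCollisionTime α T k ↔
    ∃ r r', r ≠ r' ∧ 1 ≤ rowLen α T r' k ∧ rowLen α T r k = rowLen α T r' k := by
  constructor
  · rintro ⟨r, r', h1, h2, h3⟩
    exact ⟨r, r', by omega, h2, h3⟩
  · rintro ⟨r, r', h1, h2, h3⟩
    rcases Nat.lt_or_gt_of_ne h1 with h | h
    · exact ⟨r, r', h, h2, h3⟩
    · exact ⟨r', r, h, by omega, h3.symm⟩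

theorem swapBox_swapBox (p : ℕ × ℕ) : swapBox α T (swapBox α T p) = p := by
  unfold swapBox
  split_ifs <;> simp_all [swapRow_swapRow]

theorem fst_swapBox (p : ℕ × ℕ) : (swapBox α T p).1 = p.1 := by
  unfold swapBox
  split_ifs <;> rfl

theorem collisionTime_le : collisionTime α T ≤ α.sum := Nat.findGreatest_le _

theorem le_collisionTime {k : ℕ} (hk : k ≤ α.sum) (h : IsCollisionTime α T k) :
    k ≤ collisionTime α T :=
  Nat.le_findGreatest hk h

theorem collisionLen_le_part_lowRow : collisionLen α T ≤ part α (lowRow α T) := rowLen_le_part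

variable (hc : HasCollision α T)
include hc

theorem isCollisionTime_collisionTime : IsCollisionTime α T (collisionTime α T) := by
  obtain ⟨k, hk, hck⟩ := hc
  exact Nat.findGreatest_spec hk hck

theorem collidesAbove_lowRow : CollidesAbove α T (collisionTime α T) (lowRow α T) := by
  have h := isCollisionTime_collisionTime hc
  rw [lowRow, dif_pos h]
  exact Nat.find_spec h

theorem lowRow_lt_highRow : lowRow α T < highRow α T := by
  have h := collidesAbove_lowRow hc
  rw [highRow, dif_pos h]
  exact (Nat.find_spec h).1

theorem one_le_rowLen_highRow : 1 ≤ rowLen α T (highRow α T) (collisionTime α T) := by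
  have h := collidesAbove_lowRow hc
  rw [highRow, dif_pos h]
  exact (Nat.find_spec h).2.1

theorem collisionLen_eq_rowLen_highRow :
    collisionLen α T = rowLen α T (highRow α T) (collisionTime α T) := by
  have h := collidesAbove_lowRow hc
  rw [collisionLen, highRow, dif_pos h]
  exact (Nat.find_spec h).2.2

theorem one_le_collisionLen : 1 ≤ collisionLen α T :=
  (collisionLen_eq_rowLen_highRow hc).symm ▸ one_le_rowLen_highRow hc

theorem one_le_lowRow : 1 ≤ lowRow α T := by
  by_contra h
  have := one_le_collisionLen hc
  rw [collisionLen, show lowRow α T = 0 by omega, rowLen_zero_left] at this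
  omega

theorem highRow_le_length : highRow α T ≤ α.length := by
  by_contra h
  have := one_le_rowLen_highRow hc
  rw [rowLen_eq_zero_of_length_lt (by omega)] at this
  omega

theorem one_le_highRow : 1 ≤ highRow α T := (one_le_lowRow hc).trans (lowRow_lt_highRow hc).le

theorem lowRow_le_length : lowRow α T ≤ α.length :=
  (lowRow_lt_highRow hc).le.trans (highRow_le_length hc)

theorem one_le_collisionTime (hSF : IsStandardFilling α T) : 1 ≤ collisionTime α T := by
  by_contra h
  have := one_le_collisionLen hc
  rw [collisionLen, show collisionTime α T = 0 by omega, rowLen_eq_card_filter_Icc le_rfl,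
    Finset.card_eq_zero.2] at this
  · omega
  · exact Finset.filter_eq_empty_iff.2 fun c _ hc => by have := (hSF.mem_Icc hc.1).1; omega

theorem collisionLen_le_part_highRow : collisionLen α T ≤ part α (highRow α T) :=
  (collisionLen_eq_rowLen_highRow hc).symm ▸ rowLen_le_part

theorem two_le_collisionLen (hSF : IsStandardFilling α T) (hpc : PeakCond α T) :
    2 ≤ collisionLen α T :=
  hpc.rowPeakCond _ (one_le_collisionTime hc hSF) collisionTime_le _ (one_le_lowRow hc)
    ⟨_, lowRow_lt_highRow hc, one_le_rowLen_highRow hc⟩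

end Collision

section Swap

variable {α : List ℕ} {T : ℕ × ℕ → ℕ}

theorem length_swapShape : (swapShape α T).length = α.length := length_swapParts

theorem swapBox_of_ne {c r : ℕ} (h1 : r ≠ lowRow α T) (h2 : r ≠ highRow α T) :
    swapBox α T (c, r) = (c, r) := by
  unfold swapBox
  split_ifs
  · rfl
  · rw [swapRow_of_ne h1 h2]

theorem swapBox_of_le {c r : ℕ} (h : c ≤ collisionLen α T) : swapBox α T (c, r) = (c, r) :=
  if_pos h

theorem swapBox_of_lt {c r : ℕ} (h : collisionLen α T < c) :
    swapBox α T (c, r) = (c, swapRow (lowRow α T) (highRow α T) r) :=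
  if_neg (by simpa using h)

theorem part_swapShape {r : ℕ} (h1 : 1 ≤ r) (h2 : r ≤ α.length) :
    part (swapShape α T) r = part α (swapRow (lowRow α T) (highRow α T) r) :=
  part_swapParts h1 h2

variable (hc : HasCollision α T)
include hc

theorem swapRow_collision_mem_Icc_iff {r : ℕ} :
    (1 ≤ swapRow (lowRow α T) (highRow α T) r ∧ swapRow (lowRow α T) (highRow α T) r ≤ α.length)
      ↔ (1 ≤ r ∧ r ≤ α.length) :=
  swapRow_mem_Icc_iff (one_le_lowRow hc) (lowRow_le_length hc)
    (one_le_highRow hc) (highRow_le_length hc)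

theorem swapShape_perm : (swapShape α T).Perm α :=
  swapParts_perm (one_le_lowRow hc) (lowRow_le_length hc)
    (one_le_highRow hc) (highRow_le_length hc)

theorem sum_swapShape : (swapShape α T).sum = α.sum := (swapShape_perm hc).sum_eq

theorem swapShape_ne (hnd : α.Nodup) : swapShape α T ≠ α :=
  swapParts_ne (one_le_lowRow hc) (lowRow_le_length hc) (one_le_highRow hc) (highRow_le_length hc)
    hnd (lowRow_lt_highRow hc).ne

theorem sign_swapShape {l : List ℕ} (ε : List ℕ → ℤ)
    (hε : ∀ α : List ℕ, α.Perm l → ∀ σ : Equiv.Perm (Fin l.length),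
      (∀ k : Fin l.length, l.get k = α.getD (σ k : ℕ) 0) → ε α = (Equiv.Perm.sign σ : ℤ))
    (hnd : l.Nodup) (hperm : α.Perm l) : ε (swapShape α T) = -ε α :=
  sign_swapParts (one_le_lowRow hc) (lowRow_le_length hc) (one_le_highRow hc)
    (highRow_le_length hc) ε hε hnd hperm (lowRow_lt_highRow hc).ne

theorem mem_cd_swapShape_iff {c r : ℕ} :
    (c, r) ∈ cd (swapShape α T) ↔ (c, swapRow (lowRow α T) (highRow α T) r) ∈ cd α := by
  rw [mem_cd_iff, mem_cd_iff, length_swapShape]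
  by_cases hr : 1 ≤ r ∧ r ≤ α.length
  · rw [part_swapShape hr.1 hr.2]
    have := (swapRow_collision_mem_Icc_iff hc).2 hr
    tauto
  · have := lowRow_lt_highRow hc
    have := one_le_lowRow hc
    have := highRow_le_length hc
    rw [swapRow_of_ne (by omega) (by omega)]
    tauto

theorem mem_cd_of_le_collisionLen {c r : ℕ} (hr : r = lowRow α T ∨ r = highRow α T) (h1 : 1 ≤ c)
    (hcl : c ≤ collisionLen α T) : (c, r) ∈ cd α := by
  have := collisionLen_le_part_lowRow (α := α) (T := T)
  have := collisionLen_le_part_highRow hc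
  have := lowRow_lt_highRow hc
  have := one_le_lowRow hc
  have := highRow_le_length hc
  rcases hr with rfl | rfl <;> exact mem_cd_iff.2 ⟨h1, by omega, by omega, by omega⟩

theorem mem_cd_swapShape_iff_of_le {c r : ℕ} (hcl : c ≤ collisionLen α T) :
    (c, r) ∈ cd (swapShape α T) ↔ (c, r) ∈ cd α := by
  rw [mem_cd_swapShape_iff hc]
  rcases Nat.eq_zero_or_pos c with rfl | h1
  · simp [mem_cd_iff]
  by_cases hr : r = lowRow α T ∨ r = highRow α T
  · exact iff_of_true (mem_cd_of_le_collisionLen hc (swapRow_eq_or_eq hr) h1 hcl)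
      (mem_cd_of_le_collisionLen hc hr h1 hcl)
  · push Not at hr
    rw [swapRow_of_ne hr.1 hr.2]

theorem swapBox_mem_cd_iff {p : ℕ × ℕ} : swapBox α T p ∈ cd α ↔ p ∈ cd (swapShape α T) := by
  obtain ⟨c, r⟩ := p
  rcases le_or_gt c (collisionLen α T) with hcl | hcl
  · rw [swapBox_of_le hcl, mem_cd_swapShape_iff_of_le hc hcl]
  · rw [swapBox_of_lt hcl, mem_cd_swapShape_iff hc]

theorem swapBox_mem_cd_swapShape_iff {p : ℕ × ℕ} :
    swapBox α T p ∈ cd (swapShape α T) ↔ p ∈ cd α := by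
  rw [← swapBox_mem_cd_iff hc, swapBox_swapBox]

theorem le_collisionTime_iff (hRI : RowsIncrease α T) {c r : ℕ}
    (hr : r = lowRow α T ∨ r = highRow α T) (hcd : (c, r) ∈ cd α) :
    T (c, r) ≤ collisionTime α T ↔ c ≤ collisionLen α T := by
  rw [le_rowLen_iff hRI hcd]
  rcases hr with rfl | rfl
  · rfl
  · rw [collisionLen_eq_rowLen_highRow hc]

theorem IsStandardFilling.swap (hSF : IsStandardFilling α T) :
    IsStandardFilling (swapShape α T) (swapFilling α T) := by
  refine ⟨?_, fun p hp => hSF.2 _ fun h => hp ((swapBox_mem_cd_iff hc).1 h)⟩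
  rw [sum_swapShape hc]
  refine hSF.1.comp ⟨fun p hp => (swapBox_mem_cd_iff hc).2 hp, fun p _ q _ hpq => ?_,
    fun q hq => ⟨swapBox α T q, (swapBox_mem_cd_swapShape_iff hc).2 hq, swapBox_swapBox q⟩⟩
  simpa only [swapBox_swapBox] using congrArg (swapBox α T) hpq

theorem RowsIncrease.swap (hRI : RowsIncrease α T) :
    RowsIncrease (swapShape α T) (swapFilling α T) := by
  intro c r hcd1 hcd2
  have hm1 := (swapBox_mem_cd_iff hc).2 hcd1
  have hm2 := (swapBox_mem_cd_iff hc).2 hcd2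
  unfold swapFilling at *
  by_cases hr : r = lowRow α T ∨ r = highRow α T
  · rcases lt_trichotomy c (collisionLen α T) with hlt | heq | hgt
    · rw [swapBox_of_le hlt.le, swapBox_of_le hlt] at *
      exact hRI c r hm1 hm2
    · rw [swapBox_of_le heq.le, swapBox_of_lt (by omega)] at *
      have hsw := swapRow_eq_or_eq hr
      have := (le_collisionTime_iff hc hRI hr hm1).2 heq.le
      have := (le_collisionTime_iff hc hRI hsw hm2).not.2 (by omega)
      omega
    · rw [swapBox_of_lt hgt, swapBox_of_lt (by omega)] at *
      exact hRI c _ hm1 hm2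
  · push Not at hr
    rw [swapBox_of_ne hr.1 hr.2, swapBox_of_ne hr.1 hr.2] at *
    exact hRI c r hm1 hm2

theorem FirstColIncreases.swap (hFC : FirstColIncreases α T) :
    FirstColIncreases (swapShape α T) (swapFilling α T) := by
  intro r hcd1 hcd2
  have hL := one_le_collisionLen hc
  unfold swapFilling
  rw [swapBox_of_le hL, swapBox_of_le hL]
  exact hFC r ((mem_cd_swapShape_iff_of_le hc hL).1 hcd1)
    ((mem_cd_swapShape_iff_of_le hc hL).1 hcd2)

end Swap

theorem rowLen_congr {α β : List ℕ} {T U : ℕ × ℕ → ℕ} {r s k : ℕ}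
    (h : ∀ c, 1 ≤ c → ((c, r) ∈ cd β ∧ U (c, r) ≤ k ↔ (c, s) ∈ cd α ∧ T (c, s) ≤ k)) :
    rowLen β U r k = rowLen α T s k := by
  rw [rowLen_eq_card_filter_Icc (le_max_left (part β r) (part α s)),
    rowLen_eq_card_filter_Icc (le_max_right (part β r) (part α s))]
  exact congrArg Finset.card
    (Finset.filter_congr fun c hc => h c (Finset.mem_Icc.1 hc).1)

section SwapRowLen

variable {α : List ℕ} {T : ℕ × ℕ → ℕ} (hc : HasCollision α T) (hRI : RowsIncrease α T)
include hc hRI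

theorem rowLen_swap_of_le {r k : ℕ} (hk : k ≤ collisionTime α T) :
    rowLen (swapShape α T) (swapFilling α T) r k = rowLen α T r k := by
  refine rowLen_congr fun c h1 => ?_
  unfold swapFilling
  rcases le_or_gt c (collisionLen α T) with hcl | hcl
  · rw [swapBox_of_le hcl, mem_cd_swapShape_iff_of_le hc hcl]
  rw [swapBox_of_lt hcl, mem_cd_swapShape_iff hc]
  by_cases hr : r = lowRow α T ∨ r = highRow α T
  · have hsw := swapRow_eq_or_eq hr
    refine iff_of_false (fun ⟨hm, hv⟩ => ?_) (fun ⟨hm, hv⟩ => ?_)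
    · have := (le_collisionTime_iff hc hRI hsw hm).not.2 (by omega)
      omega
    · have := (le_collisionTime_iff hc hRI hr hm).not.2 (by omega)
      omega
  · push Not at hr
    rw [swapRow_of_ne hr.1 hr.2]

theorem rowLen_swap_of_ge {r k : ℕ} (hk : collisionTime α T ≤ k) :
    rowLen (swapShape α T) (swapFilling α T) r k =
      rowLen α T (swapRow (lowRow α T) (highRow α T) r) k := by
  refine rowLen_congr fun c h1 => ?_
  unfold swapFilling
  rcases le_or_gt c (collisionLen α T) with hcl | hcl
  · rw [swapBox_of_le hcl, mem_cd_swapShape_iff_of_le hc hcl]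
    by_cases hr : r = lowRow α T ∨ r = highRow α T
    · have hsw := swapRow_eq_or_eq hr
      have hm := mem_cd_of_le_collisionLen hc hr h1 hcl
      have hm' := mem_cd_of_le_collisionLen hc hsw h1 hcl
      exact iff_of_true ⟨hm, ((le_collisionTime_iff hc hRI hr hm).2 hcl).trans hk⟩
        ⟨hm', ((le_collisionTime_iff hc hRI hsw hm').2 hcl).trans hk⟩
    · push Not at hr
      rw [swapRow_of_ne hr.1 hr.2]
  · rw [swapBox_of_lt hcl, mem_cd_swapShape_iff hc]

theorem collidesAbove_swap_iff {k r : ℕ} (hk : k ≤ collisionTime α T) :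
    CollidesAbove (swapShape α T) (swapFilling α T) k r ↔ CollidesAbove α T k r := by
  simp only [CollidesAbove, rowLen_swap_of_le hc hRI hk]

theorem isCollisionTime_swap_iff (k : ℕ) :
    IsCollisionTime (swapShape α T) (swapFilling α T) k ↔ IsCollisionTime α T k := by
  rcases le_or_gt k (collisionTime α T) with hk | hk
  · simp only [IsCollisionTime, collidesAbove_swap_iff hc hRI hk]
  -- after the collision time the swap merely permutes the row lengths
  rw [isCollisionTime_iff_ne, isCollisionTime_iff_ne]
  simp only [rowLen_swap_of_ge hc hRI hk.le]
  have hinj : ∀ a b, swapRow (lowRow α T) (highRow α T) a = swapRow (lowRow α T) (highRow α T) b →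
      a = b := fun a b h => by
    simpa only [swapRow_swapRow] using congrArg (swapRow (lowRow α T) (highRow α T)) h
  constructor
  · rintro ⟨r, r', hne, h2, h3⟩
    exact ⟨_, _, fun h => hne (hinj _ _ h), h2, h3⟩
  · rintro ⟨r, r', hne, h2, h3⟩
    refine ⟨swapRow (lowRow α T) (highRow α T) r, swapRow (lowRow α T) (highRow α T) r',
      fun h => hne (hinj _ _ h), ?_, ?_⟩ <;> simpa only [swapRow_swapRow]

theorem hasCollision_swap : HasCollision (swapShape α T) (swapFilling α T) :=
  ⟨collisionTime α T, (sum_swapShape hc).symm ▸ collisionTime_le,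
    (isCollisionTime_swap_iff hc hRI _).2 (isCollisionTime_collisionTime hc)⟩

theorem collisionTime_swap :
    collisionTime (swapShape α T) (swapFilling α T) = collisionTime α T := by
  unfold collisionTime
  rw [sum_swapShape hc]
  congr 1
  exact funext fun k => propext (isCollisionTime_swap_iff hc hRI k)

theorem lowRow_swap : lowRow (swapShape α T) (swapFilling α T) = lowRow α T := by
  have h := isCollisionTime_collisionTime hc
  have h' := isCollisionTime_collisionTime (hasCollision_swap hc hRI)
  rw [lowRow, lowRow, dif_pos h, dif_pos h']
  refine Nat.find_congr' fun {r} => ?_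
  rw [collisionTime_swap hc hRI, collidesAbove_swap_iff hc hRI le_rfl]

theorem highRow_swap : highRow (swapShape α T) (swapFilling α T) = highRow α T := by
  have h := collidesAbove_lowRow hc
  have h' := collidesAbove_lowRow (hasCollision_swap hc hRI)
  rw [highRow, highRow, dif_pos h, dif_pos h']
  refine Nat.find_congr' fun {r'} => ?_
  simp only [collisionTime_swap hc hRI, lowRow_swap hc hRI, rowLen_swap_of_le hc hRI le_rfl]

theorem collisionLen_swap : collisionLen (swapShape α T) (swapFilling α T) = collisionLen α T := by
  rw [collisionLen, collisionLen, lowRow_swap hc hRI, collisionTime_swap hc hRI,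
    rowLen_swap_of_le hc hRI le_rfl]

theorem swapBox_swap : swapBox (swapShape α T) (swapFilling α T) = swapBox α T := by
  funext p
  simp only [swapBox, collisionLen_swap hc hRI, lowRow_swap hc hRI, highRow_swap hc hRI]

theorem swapFilling_swapFilling : swapFilling (swapShape α T) (swapFilling α T) = T := by
  funext p
  simp only [swapFilling, swapBox_swap hc hRI, swapBox_swapBox]

theorem swapShape_swapShape : swapShape (swapShape α T) (swapFilling α T) = α := by
  rw [swapShape, lowRow_swap hc hRI, highRow_swap hc hRI, swapShape]
  exact swapParts_swapParts (one_le_lowRow hc) (lowRow_le_length hc)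
    (one_le_highRow hc) (highRow_le_length hc)

end SwapRowLen

section SwapInvariants

variable {α : List ℕ} {T : ℕ × ℕ → ℕ} (hc : HasCollision α T)
include hc

theorem PeakCond.swap (hSF : IsStandardFilling α T) (hRI : RowsIncrease α T)
    (hpc : PeakCond α T) : PeakCond (swapShape α T) (swapFilling α T) := by
  rw [peakCond_iff_rowPeakCond (hSF.swap hc) (hRI.swap hc)]
  rintro k hk1 hk2 r hr1 ⟨r', hrr', hpos⟩
  rw [sum_swapShape hc] at hk2
  have hrpc := hpc.rowPeakCond
  rcases le_or_gt k (collisionTime α T) with hk | hk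
  · rw [rowLen_swap_of_le hc hRI hk] at hpos ⊢
    exact hrpc k hk1 hk2 r hr1 ⟨r', hrr', hpos⟩
  rw [rowLen_swap_of_ge hc hRI hk.le] at hpos ⊢
  have hL2 := two_le_collisionLen hc hSF hpc
  have hjj' := lowRow_lt_highRow hc
  have hlow : collisionLen α T ≤ rowLen α T (lowRow α T) k := rowLen_mono α T _ hk.le
  have hhigh : collisionLen α T ≤ rowLen α T (highRow α T) k :=
    (collisionLen_eq_rowLen_highRow hc).symm ▸ rowLen_mono α T _ hk.le
  by_cases hr : r = lowRow α T ∨ r = highRow α T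
  · rcases swapRow_eq_or_eq hr with hs | hs <;> rw [hs] <;> omega
  push Not at hr
  rw [swapRow_of_ne hr.1 hr.2]
  by_cases hr' : r' = lowRow α T ∨ r' = highRow α T
  · refine hrpc k hk1 hk2 r hr1 ⟨highRow α T, ?_, by omega⟩
    rcases hr' with rfl | rfl <;> omega
  · push Not at hr'
    rw [swapRow_of_ne hr'.1 hr'.2] at hpos
    exact hrpc k hk1 hk2 r hr1 ⟨r', hrr', hpos⟩

theorem swapBox_eq_self_of_le_collisionTime (hRI : RowsIncrease α T) {p : ℕ × ℕ} (hp : p ∈ cd α)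
    (hle : T p ≤ collisionTime α T) : swapBox α T p = p := by
  obtain ⟨c, r⟩ := p
  rcases le_or_gt c (collisionLen α T) with hcl | hcl
  · exact swapBox_of_le hcl
  by_cases hr : r = lowRow α T ∨ r = highRow α T
  · exact absurd ((le_collisionTime_iff hc hRI hr hp).1 hle) (by omega)
  · push Not at hr
    exact swapBox_of_ne hr.1 hr.2

theorem readsBeforeC_swapBox_iff (hSF : IsStandardFilling α T) (hRI : RowsIncrease α T)
    {p q : ℕ × ℕ} (hp : p ∈ cd α) (hq : q ∈ cd α) (hval : T q = T p + 1) :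
    ReadsBeforeC (swapBox α T q) (swapBox α T p) ↔ ReadsBeforeC q p := by
  by_cases hcc : p.1 = q.1
  · -- at time `T q` the rows of `p` and `q` both have length `p.1`, so neither box is moved
    have hrne : q.2 ≠ p.2 := fun h => by
      rw [show p = q from Prod.ext hcc h.symm] at hval
      omega
    have hp' : (p.1, p.2) ∈ cd α := hp
    have hq' : (q.1, q.2) ∈ cd α := hq
    have hcoll : IsCollisionTime α T (T q) := by
      rw [isCollisionTime_iff_ne]
      refine ⟨p.2, q.2, hrne.symm, ?_, ?_⟩
      · rw [rowLen_of_mem_cd hRI hq']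
        exact one_le_fst_of_mem_cd hq
      · rw [rowLen_of_mem_cd hRI hq', hval, rowLen_succ_of_ne hSF.injOn hq hval hrne,
          rowLen_of_mem_cd hRI hp', hcc]
    have hle := le_collisionTime (hSF.mem_Icc hq).2 hcoll
    rw [swapBox_eq_self_of_le_collisionTime hc hRI hp (by omega),
      swapBox_eq_self_of_le_collisionTime hc hRI hq hle]
  · unfold ReadsBeforeC
    rw [fst_swapBox, fst_swapBox]
    constructor <;> rintro (h | ⟨h, _⟩) <;> first | exact Or.inl h | exact absurd h.symm hcc

theorem DesWord_wC_swap (hSF : IsStandardFilling α T) (hRI : RowsIncrease α T) :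
    DesWord (wC (swapShape α T) (swapFilling α T)) = DesWord (wC α T) := by
  ext i
  rw [mem_DesWord_wC_iff (hSF.swap hc).injOn, mem_DesWord_wC_iff hSF.injOn]
  constructor
  · rintro ⟨p, hp, q, hq, rfl, hTq, hlt⟩
    have hp' := (swapBox_mem_cd_iff hc).2 hp
    have hq' := (swapBox_mem_cd_iff hc).2 hq
    refine ⟨_, hp', _, hq', rfl, hTq, ?_⟩
    have := readsBeforeC_swapBox_iff hc hSF hRI hp' hq' hTq
    rw [swapBox_swapBox, swapBox_swapBox] at this
    exact this.1 hlt
  · rintro ⟨p, hp, q, hq, rfl, hTq, hlt⟩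
    refine ⟨swapBox α T p, (swapBox_mem_cd_swapShape_iff hc).2 hp, swapBox α T q,
      (swapBox_mem_cd_swapShape_iff hc).2 hq, ?_, ?_, ?_⟩
    · simp only [swapFilling, swapBox_swapBox]
    · simp only [swapFilling, swapBox_swapBox, hTq]
    · exact (readsBeforeC_swapBox_iff hc hSF hRI hp hq hTq).2 hlt

theorem IsPeakComposition.swap {n : ℕ} (hSF : IsStandardFilling α T) (hpc : PeakCond α T)
    (hα : IsPeakComposition n α) : IsPeakComposition n (swapShape α T) := by
  refine ⟨⟨fun a ha => hα.1.1 a ((swapShape_perm hc).mem_iff.1 ha),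
    (sum_swapShape hc).trans hα.1.2⟩, fun i hi => ?_⟩
  rw [length_swapShape] at hi
  rw [getD_eq_part, part_swapShape (by omega) (by omega)]
  have hL2 := two_le_collisionLen hc hSF hpc
  have := collisionLen_le_part_lowRow (α := α) (T := T)
  have := collisionLen_le_part_highRow hc
  by_cases hw : i + 1 = lowRow α T ∨ i + 1 = highRow α T
  · rcases swapRow_eq_or_eq hw with hs | hs <;> rw [hs] <;> omega
  · push Not at hw
    rw [swapRow_of_ne hw.1 hw.2, ← getD_eq_part]
    exact hα.2 i hi

end SwapInvariants

/-! ### Collision-free tableaux -/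

theorem one_le_part {α : List ℕ} (hpos : ∀ a ∈ α, 0 < a) {r : ℕ} (h1 : 1 ≤ r)
    (h2 : r ≤ α.length) : 1 ≤ part α r := by
  rw [part, List.getD_eq_getElem _ _ (by omega)]
  exact hpos _ (List.getElem_mem _)

theorem part_lt_part_of_pairwise {α : List ℕ} (h : α.Pairwise (· > ·)) {r r' : ℕ} (h1 : 1 ≤ r)
    (h2 : r < r') (h3 : r' ≤ α.length) : part α r' < part α r := by
  rw [part, part, List.getD_eq_getElem _ _ (by omega), List.getD_eq_getElem _ _ (by omega)]
  exact List.pairwise_iff_getElem.1 h _ _ _ _ (by omega)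

section NoCollision

variable {α : List ℕ} {T : ℕ × ℕ → ℕ}

theorem YoungTriple.lt_of_lt (hRI : RowsIncrease α T) (hYT : YoungTriple α T)
    (hT : Set.InjOn T (cd α)) (hstr : α.Pairwise (· > ·)) {c r r' : ℕ} (h1 : 1 ≤ r)
    (h2 : r < r') (hq : (c, r') ∈ cd α) : T (c, r) < T (c, r') := by
  obtain ⟨hc1, hc2, hr'1, hr'2⟩ := mem_cd_iff.1 hq
  have hlt := part_lt_part_of_pairwise hstr h1 h2 hr'2
  have hp : (c, r) ∈ cd α := mem_cd_iff.2 ⟨hc1, by omega, h1, by omega⟩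
  by_contra hcon
  have hne : T (c, r') ≠ T (c, r) := fun h => by
    have := congrArg Prod.snd (hT hq hp h)
    simp only at this
    omega
  -- the triple condition propagates `T (·, r') < T (·, r)` along row `r`, so row `r'` would
  -- be as long as the longer row `r`
  have climb : ∀ m, c + m ≤ part α r → (c + m, r') ∈ cd α ∧ T (c + m, r') < T (c + m, r) := by
    intro m
    induction m with
    | zero => exact fun _ => by simpa only [Nat.add_zero] using ⟨hq, by omega⟩
    | succ d ih =>
      intro hle
      have hd := ih (by omega)
      have hmem1 : (c + d, r) ∈ cd α := mem_cd_iff.2 ⟨by omega, by omega, h1, by omega⟩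
      have hmem2 : (c + d + 1, r) ∈ cd α := mem_cd_iff.2 ⟨by omega, by omega, h1, by omega⟩
      exact hYT (c + d) r r' h2 hd.1 hmem2 (hd.2.le.trans (hRI _ _ hmem1 hmem2).le)
  have := mem_cd_iff.1 (climb (part α r - c) (by omega)).1
  omega

theorem YoungTriple.not_hasCollision (hSF : IsStandardFilling α T) (hRI : RowsIncrease α T)
    (hYT : YoungTriple α T) (hstr : α.Pairwise (· > ·)) : ¬ HasCollision α T := by
  rintro ⟨k, hk, r, r', h2, hpos, heq⟩
  have h1 : 1 ≤ r := by
    by_contra h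
    rw [show r = 0 by omega, rowLen_zero_left] at heq
    omega
  have hr'len : r' ≤ α.length := by
    by_contra h
    rw [rowLen_eq_zero_of_length_lt (by omega)] at hpos
    omega
  set m := rowLen α T r' k
  have hlt := part_lt_part_of_pairwise hstr h1 h2 hr'len
  have hm := rowLen_le_part (α := α) (T := T) (r := r') (k := k)
  have hq : (m, r') ∈ cd α := mem_cd_iff.2 ⟨hpos, hm, by omega, hr'len⟩
  have hp : (m + 1, r) ∈ cd α := mem_cd_iff.2 ⟨by omega, by omega, h1, by omega⟩
  have hTq : T (m, r') ≤ k := (le_rowLen_iff hRI hq).2 le_rfl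
  have hTp : k < T (m + 1, r) := lt_of_not_ge fun h => by
    have := (le_rowLen_iff hRI hp).1 h
    omega
  have htrip := hYT m r r' h2 hq hp (by omega)
  have := hYT.lt_of_lt hRI hSF.injOn hstr h1 h2 htrip.1
  omega

theorem youngTriple_of_not_hasCollision (hSF : IsStandardFilling α T) (hRI : RowsIncrease α T)
    (hnc : ¬ HasCollision α T) : YoungTriple α T := by
  intro c r r' h2 hm1 hm2 hle
  obtain ⟨-, -, h1, hrα⟩ := mem_cd_iff.1 hm2
  have hc1 := one_le_fst_of_mem_cd hm1
  set v := T (c + 1, r)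
  have hvsum : v ≤ α.sum := (hSF.mem_Icc hm2).2
  have hne : T (c, r') ≠ v := fun h => by
    have := congrArg Prod.fst (hSF.injOn hm1 hm2 h)
    simp only at this
    omega
  have hcr : (c, r) ∈ cd α := mem_cd_iff.2 ⟨hc1, by have := (mem_cd_iff.1 hm2).2.1; omega, h1, hrα⟩
  have hrlen : rowLen α T r (v - 1) = c := by
    have hlow := (le_rowLen_iff hRI hcr (k := v - 1)).1 (by have := hRI c r hcr hm2; omega)
    have hhigh := (le_rowLen_iff hRI hm2 (k := v - 1)).not.1 (by omega)
    omega
  have hr'low : c ≤ rowLen α T r' (v - 1) := (le_rowLen_iff hRI hm1).1 (by omega)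
  have hr'ne : rowLen α T r' (v - 1) ≠ c := fun h =>
    hnc ⟨v - 1, by omega, r, r', h2, by omega, by omega⟩
  have hcd' : (c + 1, r') ∈ cd α := by
    obtain ⟨-, -, h3, h4⟩ := mem_cd_iff.1 hm1
    have := rowLen_le_part (α := α) (T := T) (r := r') (k := v - 1)
    exact mem_cd_iff.2 ⟨by omega, by omega, h3, h4⟩
  refine ⟨hcd', ?_⟩
  have := (le_rowLen_iff hRI hcd').2 (by omega : c + 1 ≤ rowLen α T r' (v - 1))
  omega

theorem pairwise_gt_of_not_hasCollision (hSF : IsStandardFilling α T) (hRI : RowsIncrease α T)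
    (hpc : PeakCond α T) (hnc : ¬ HasCollision α T) (hpos : ∀ a ∈ α, 0 < a) :
    α.Pairwise (· > ·) := by
  rw [List.pairwise_iff_getElem]
  intro i i' hi hi' hii'
  rw [getElem_eq_part, getElem_eq_part]
  set r := i + 1
  set r' := i' + 1
  have hcd1 : (1, r') ∈ cd α := mem_cd_iff.2 ⟨le_rfl, one_le_part hpos (by omega) hi', by omega, hi'⟩
  set t₀ := T (1, r')
  have ht₀ := hSF.mem_Icc hcd1
  have hr'1 : rowLen α T r' t₀ = 1 := rowLen_of_mem_cd hRI hcd1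
  have hr2 : 2 ≤ rowLen α T r t₀ :=
    hpc.rowPeakCond t₀ ht₀.1 ht₀.2 r (by omega) ⟨r', by omega, by omega⟩
  -- row `r'` gains at most one box per step and row `r` never shrinks, so without collisions
  -- row `r` stays longer from the moment row `r'` starts
  have hstep : ∀ k, t₀ ≤ k → k ≤ α.sum → rowLen α T r' k < rowLen α T r k := by
    intro k hk
    induction k, hk using Nat.le_induction with
    | base => exact fun _ => by omega
    | succ k hk ih =>
      intro hle
      have := ih (by omega)
      have := rowLen_succ_le hSF.injOn r' k
      have := rowLen_mono α T r (show k ≤ k + 1 by omega)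
      have := rowLen_mono α T r' (show t₀ ≤ k + 1 by omega)
      by_contra hcon
      exact hnc ⟨k + 1, hle, r, r', by omega, by omega, by omega⟩
  have := hstep α.sum ht₀.2 le_rfl
  rwa [rowLen_eq_part hSF (by omega) hi, rowLen_eq_part hSF (by omega) hi'] at this

end NoCollision

/-! ### Peak sets of the two reading words -/

theorem PeakSet_eq_of_subset {X Y : Finset ℕ} (C : ℕ → Prop) (hXY : X ⊆ Y)
    (hX : ∀ i ∈ X, ¬ C i) (hYX : ∀ i ∈ Y, i ∉ X → C i ∧ C (i + 1))
    (hC : ∀ j, 1 ≤ j → C (j + 1) → j ∈ Y) : PeakSet Y = PeakSet X := by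
  ext i
  simp only [PeakSet, Finset.mem_filter]
  constructor
  · rintro ⟨hiY, hi1, hi1Y⟩
    refine ⟨by_contra fun hiX => hi1Y (hC (i - 1) (by omega) ?_), hi1, fun h => hi1Y (hXY h)⟩
    rw [Nat.sub_add_cancel (by omega)]
    exact (hYX i hiY hiX).1
  · rintro ⟨hiX, hi1, hi1X⟩
    refine ⟨hXY hiX, hi1, fun hiY => hX i hiX ?_⟩
    have := (hYX _ hiY hi1X).2
    rwa [Nat.sub_add_cancel (by omega)] at this

section ReadingWords

variable {α : List ℕ} {T : ℕ × ℕ → ℕ}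

theorem FirstColIncreases.lt_of_lt (hFC : FirstColIncreases α T) (hpos : ∀ a ∈ α, 0 < a)
    {r r' : ℕ} (h1 : 1 ≤ r) (h2 : r < r') (hlen : r' ≤ α.length) : T (1, r) < T (1, r') := by
  have hmem : ∀ s, 1 ≤ s → s ≤ α.length → (1, s) ∈ cd α := fun s hs1 hs2 =>
    mem_cd_iff.2 ⟨le_rfl, one_le_part hpos hs1 hs2, hs1, hs2⟩
  induction r', h2 using Nat.le_induction with
  | base => exact hFC r (hmem r h1 (by omega)) (hmem _ (by omega) hlen)
  | succ s hs ih =>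
    exact (ih (by omega)).trans (hFC s (hmem s (by omega) (by omega)) (hmem _ (by omega) hlen))

theorem snd_lt_snd_of_fst_eq_one (hFC : FirstColIncreases α T)
    (hpos : ∀ a ∈ α, 0 < a) {p q : ℕ × ℕ} (hp : p ∈ cd α) (hq : q ∈ cd α) (hp1 : p.1 = 1)
    (hq1 : q.1 = 1) (hv : T p < T q) : p.2 < q.2 := by
  obtain ⟨c, r⟩ := p
  obtain ⟨c', r'⟩ := q
  simp only at hp1 hq1 ⊢
  subst hp1 hq1
  rcases lt_trichotomy r r' with h | rfl | h
  · exact h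
  · omega
  · have := hFC.lt_of_lt hpos (mem_cd_iff.1 hq).2.2.1 h (mem_cd_iff.1 hp).2.2.2
    omega

variable (hSF : IsStandardFilling α T) (hFC : FirstColIncreases α T) (hpos : ∀ a ∈ α, 0 < a)
include hSF hFC hpos

theorem DesWord_wC_subset_wY : DesWord (wC α T) ⊆ DesWord (wY α T) := by
  intro i hi
  obtain ⟨p, hp, q, hq, hTp, hTq, hlt⟩ := (mem_DesWord_wC_iff hSF.injOn).1 hi
  refine (mem_DesWord_wY_iff hSF.injOn).2 ⟨p, hp, q, hq, hTp, hTq, ?_⟩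
  have := one_le_fst_of_mem_cd hq
  unfold ReadsBeforeY
  rcases hlt with h | ⟨h, h2⟩
  · rcases Nat.lt_or_ge q.1 2 with hq2 | hq2
    · exact Or.inr (Or.inl ⟨by omega, by omega⟩)
    · exact Or.inr (Or.inr ⟨hq2, by omega, Or.inl h⟩)
  · rcases Nat.lt_or_ge q.1 2 with hq2 | hq2
    · have := snd_lt_snd_of_fst_eq_one hFC hpos hp hq (by omega) (by omega) (by omega)
      omega
    · exact Or.inr (Or.inr ⟨hq2, by omega, Or.inr ⟨h, h2⟩⟩)

theorem fst_ne_one_of_mem_DesWord_wC {i : ℕ} (hi : i ∈ DesWord (wC α T)) {p : ℕ × ℕ}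
    (hp : p ∈ cd α) (hTp : T p = i) : p.1 ≠ 1 := by
  obtain ⟨p', hp', q, hq, hTp', hTq, hlt⟩ := (mem_DesWord_wC_iff hSF.injOn).1 hi
  obtain rfl : p = p' := hSF.injOn hp hp' (hTp.trans hTp'.symm)
  intro hp1
  have := one_le_fst_of_mem_cd hq
  rcases hlt with h | ⟨h, h2⟩
  · omega
  · have := snd_lt_snd_of_fst_eq_one hFC hpos hp hq hp1 (by omega) (by omega)
    omega

theorem mem_DesWord_wY_of_fst_eq_one {j : ℕ} (hj : 1 ≤ j) {q : ℕ × ℕ} (hq : q ∈ cd α)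
    (hTq : T q = j + 1) (hq1 : q.1 = 1) : j ∈ DesWord (wY α T) := by
  obtain ⟨p, hp, hTp⟩ := hSF.1.surjOn ⟨hj, by have := (hSF.mem_Icc hq).2; omega⟩
  refine (mem_DesWord_wY_iff hSF.injOn).2 ⟨p, hp, q, hq, hTp, hTq, ?_⟩
  have := one_le_fst_of_mem_cd hp
  rcases Nat.lt_or_ge p.1 2 with hp2 | hp2
  · exact Or.inl ⟨hq1, by omega,
      snd_lt_snd_of_fst_eq_one hFC hpos hp hq (by omega) hq1 (by omega)⟩
  · exact Or.inr (Or.inl ⟨hq1, hp2⟩)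

omit hFC hpos in
theorem fst_eq_one_of_mem_DesWord_wY_of_not_mem_wC {i : ℕ} (hiY : i ∈ DesWord (wY α T))
    (hiX : i ∉ DesWord (wC α T)) :
    ∃ p ∈ cd α, ∃ q ∈ cd α, T p = i ∧ T q = i + 1 ∧ p.1 = 1 ∧ q.1 = 1 := by
  obtain ⟨p, hp, q, hq, hTp, hTq, hlt⟩ := (mem_DesWord_wY_iff hSF.injOn).1 hiY
  have hnot : ¬ ReadsBeforeC q p := fun h =>
    hiX ((mem_DesWord_wC_iff hSF.injOn).2 ⟨p, hp, q, hq, hTp, hTq, h⟩)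
  have := one_le_fst_of_mem_cd hp
  unfold ReadsBeforeY ReadsBeforeC at hlt
  unfold ReadsBeforeC at hnot
  exact ⟨p, hp, q, hq, hTp, hTq, by omega, by omega⟩

theorem PeakSet_DesWord_wY : PeakSet (DesWord (wY α T)) = PeakSet (DesWord (wC α T)) := by
  refine PeakSet_eq_of_subset (fun i => ∃ p ∈ cd α, T p = i ∧ p.1 = 1)
    (DesWord_wC_subset_wY hSF hFC hpos) (fun i hi ⟨p, hp, hTp, hp1⟩ =>
      fst_ne_one_of_mem_DesWord_wC hSF hFC hpos hi hp hTp hp1) (fun i hiY hiX => ?_)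
    (fun j hj ⟨q, hq, hTq, hq1⟩ => mem_DesWord_wY_of_fst_eq_one hSF hFC hpos hj hq hTq hq1)
  obtain ⟨p, hp, q, hq, hTp, hTq, hp1, hq1⟩ :=
    fst_eq_one_of_mem_DesWord_wY_of_not_mem_wC hSF hiY hiX
  exact ⟨⟨p, hp, hTp, hp1⟩, ⟨q, hq, hTq, hq1⟩⟩

end ReadingWords

/-! ### Cancellation -/

theorem SPITset_finite (α : List ℕ) : (SPITset α).Finite := by
  have hmaps : Set.MapsTo (fun (U : ℕ × ℕ → ℕ) (b : cd α) => U b) (SPITset α)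
      (Set.pi Set.univ fun _ => Set.Icc 1 α.sum) :=
    fun U hU b _ => hU.1.1.1.mapsTo b.2
  refine Set.Finite.of_finite_image ((Set.Finite.pi fun _ => Set.finite_Icc 1 α.sum).subset
    (Set.mapsTo_iff_image_subset.1 hmaps)) fun U₁ h₁ U₂ h₂ heq => funext fun p => ?_
  by_cases hp : p ∈ cd α
  · exact congrFun heq ⟨p, hp⟩
  · rw [h₁.1.1.2 p hp, h₂.1.1.2 p hp]

theorem SPYCTset_subset_SPITset (α : List ℕ) : SPYCTset α ⊆ SPITset α :=
  fun _ ⟨⟨hSF, hRI, hFC, _⟩, hpc⟩ => ⟨⟨hSF, hRI, hFC⟩, hpc⟩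

theorem SPYCTset_finite (α : List ℕ) : (SPYCTset α).Finite :=
  (SPITset_finite α).subset (SPYCTset_subset_SPITset α)

noncomputable def qsqTerm (n : ℕ) (α : List ℕ) (T : ℕ × ℕ → ℕ) : MvPowerSeries ℕ ℤ :=
  Kqs n (compOf n (PeakSet (DesWord (wC α T))))

theorem finite_setOf_peak_perm (n : ℕ) (l : List ℕ) :
    {α : List ℕ | IsPeakComposition n α ∧ α.Perm l}.Finite :=
  l.permutations.toFinset.finite_toSet.subset fun α hα => by
    simpa only [Finset.mem_coe, List.mem_toFinset, List.mem_permutations] using hα.2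

noncomputable def spitPairs (n : ℕ) (l : List ℕ) : Finset (Σ _ : List ℕ, ℕ × ℕ → ℕ) :=
  (finite_setOf_peak_perm n l).toFinset.sigma fun α => (SPITset_finite α).toFinset

theorem mem_spitPairs {n : ℕ} {l : List ℕ} {x : Σ _ : List ℕ, ℕ × ℕ → ℕ} :
    x ∈ spitPairs n l ↔ (IsPeakComposition n x.1 ∧ x.1.Perm l) ∧ IsSPIT x.1 x.2 := by
  simp only [spitPairs, Finset.mem_sigma, Set.Finite.mem_toFinset]
  rfl

theorem finsum_smul_QSQ_eq_sum_spitPairs (n : ℕ) (l : List ℕ) (ε : List ℕ → ℤ) :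
    ∑ᶠ α ∈ {α : List ℕ | IsPeakComposition n α ∧ α.Perm l}, ε α • QSQ n α =
      ∑ x ∈ spitPairs n l, ε x.1 • qsqTerm n x.1 x.2 := by
  rw [spitPairs, Finset.sum_sigma, finsum_mem_eq_finite_toFinset_sum _ (finite_setOf_peak_perm n l)]
  refine Finset.sum_congr rfl fun α _ => ?_
  rw [QSQ, finsum_mem_eq_finite_toFinset_sum _ (SPITset_finite α), Finset.smul_sum]
  rfl

theorem IsSPIT.swap {α : List ℕ} {T : ℕ × ℕ → ℕ} (hc : HasCollision α T) (hT : IsSPIT α T) :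
    IsSPIT (swapShape α T) (swapFilling α T) :=
  ⟨⟨hT.1.1.swap hc, hT.1.2.1.swap hc, hT.1.2.2.swap hc⟩, hT.2.swap hc hT.1.1 hT.1.2.1⟩

theorem sum_spitPairs_hasCollision_eq_zero {n : ℕ} {l : List ℕ} (hnd : l.Nodup)
    (ε : List ℕ → ℤ)
    (hε : ∀ α : List ℕ, α.Perm l → ∀ σ : Equiv.Perm (Fin l.length),
      (∀ k : Fin l.length, l.get k = α.getD (σ k : ℕ) 0) → ε α = (Equiv.Perm.sign σ : ℤ)) :
    ∑ x ∈ (spitPairs n l).filter (fun x => HasCollision x.1 x.2), ε x.1 • qsqTerm n x.1 x.2 = 0 := by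
  refine Finset.sum_involution (fun x _ => ⟨swapShape x.1 x.2, swapFilling x.1 x.2⟩) ?_ ?_ ?_ ?_
  · rintro ⟨α, T⟩ hx
    obtain ⟨hmem, hc⟩ := Finset.mem_filter.1 hx
    obtain ⟨⟨-, hperm⟩, hT⟩ := mem_spitPairs.1 hmem
    simp only [qsqTerm, DesWord_wC_swap hc hT.1.1 hT.1.2.1, sign_swapShape hc ε hε hnd hperm,
      neg_smul, add_neg_cancel]
  · rintro ⟨α, T⟩ hx - h
    obtain ⟨hmem, hc⟩ := Finset.mem_filter.1 hx
    obtain ⟨⟨-, hperm⟩, -⟩ := mem_spitPairs.1 hmem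
    exact swapShape_ne hc (hperm.nodup_iff.2 hnd) (congrArg Sigma.fst h)
  · rintro ⟨α, T⟩ hx
    obtain ⟨hmem, hc⟩ := Finset.mem_filter.1 hx
    obtain ⟨⟨hpeak, hperm⟩, hT⟩ := mem_spitPairs.1 hmem
    exact Finset.mem_filter.2 ⟨mem_spitPairs.2 ⟨⟨hpeak.swap hc hT.1.1 hT.2,
      (swapShape_perm hc).trans hperm⟩, hT.swap hc⟩, hasCollision_swap hc hT.1.2.1⟩
  · rintro ⟨α, T⟩ hx
    obtain ⟨hmem, hc⟩ := Finset.mem_filter.1 hx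
    obtain ⟨-, hT⟩ := mem_spitPairs.1 hmem
    simp only [swapShape_swapShape hc hT.1.2.1, swapFilling_swapFilling hc hT.1.2.1]

theorem eq_of_perm_of_not_hasCollision {α l : List ℕ} {T : ℕ × ℕ → ℕ} (hT : IsSPIT α T)
    (hnc : ¬ HasCollision α T) (hperm : α.Perm l) (hl : l.Pairwise (· > ·))
    (hpos : ∀ a ∈ l, 0 < a) : α = l :=
  hperm.eq_of_pairwise (fun a b _ _ h1 h2 => by omega)
    (pairwise_gt_of_not_hasCollision hT.1.1 hT.1.2.1 hT.2 hnc fun a ha => hpos a (hperm.subset ha))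
    hl

theorem sum_spitPairs_not_hasCollision {n : ℕ} {l : List ℕ} (hl : l.Pairwise (· > ·))
    (hpos : ∀ a ∈ l, 0 < a) (hlpeak : IsPeakComposition n l) (ε : List ℕ → ℤ) (hεl : ε l = 1) :
    ∑ x ∈ (spitPairs n l).filter (fun x => ¬ HasCollision x.1 x.2), ε x.1 • qsqTerm n x.1 x.2 =
      ∑ U ∈ (SPYCTset_finite l).toFinset, qsqTerm n l U := by
  have hfst : ∀ x ∈ (spitPairs n l).filter (fun x => ¬ HasCollision x.1 x.2), x.1 = l := by
    intro x hx
    obtain ⟨hmem, hnc⟩ := Finset.mem_filter.1 hx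
    obtain ⟨⟨-, hperm⟩, hT⟩ := mem_spitPairs.1 hmem
    exact eq_of_perm_of_not_hasCollision hT hnc hperm hl hpos
  refine Finset.sum_bij (fun x _ => x.2) ?_ ?_ ?_ ?_
  · rintro ⟨α, T⟩ hx
    obtain rfl := hfst _ hx
    obtain ⟨hmem, hnc⟩ := Finset.mem_filter.1 hx
    obtain ⟨-, ⟨hSF, hRI, hFC⟩, hpc⟩ := mem_spitPairs.1 hmem
    rw [Set.Finite.mem_toFinset]
    exact ⟨⟨hSF, hRI, hFC, youngTriple_of_not_hasCollision hSF hRI hnc⟩, hpc⟩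
  · rintro ⟨α, T⟩ hx ⟨β, U⟩ hy (rfl : T = U)
    obtain rfl := hfst _ hx
    obtain rfl := hfst _ hy
    rfl
  · intro U hU
    rw [Set.Finite.mem_toFinset] at hU
    obtain ⟨⟨hSF, hRI, hFC, hYT⟩, hpc⟩ := hU
    exact ⟨⟨l, U⟩, Finset.mem_filter.2 ⟨mem_spitPairs.2 ⟨⟨hlpeak, List.Perm.refl l⟩,
      ⟨hSF, hRI, hFC⟩, hpc⟩, hYT.not_hasCollision hSF hRI hl⟩, rfl⟩
  · rintro ⟨α, T⟩ hx
    obtain rfl := hfst _ hx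
    rw [hεl, one_smul]

theorem PYQS_eq_sum_qsqTerm (n : ℕ) {l : List ℕ} (hpos : ∀ a ∈ l, 0 < a) :
    PYQS n l = ∑ U ∈ (SPYCTset_finite l).toFinset, qsqTerm n l U := by
  rw [PYQS, finsum_mem_eq_finite_toFinset_sum _ (SPYCTset_finite l)]
  refine Finset.sum_congr rfl fun U hU => ?_
  obtain ⟨⟨hSF, -, hFC, -⟩, -⟩ := (Set.Finite.mem_toFinset _).1 hU
  rw [qsqTerm, PeakSet_DesWord_wY hSF hFC hpos]

theorem IsComposition.isPeakComposition_of_pairwise {n : ℕ} {l : List ℕ}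
    (hcomp : IsComposition n l) (hl : l.Pairwise (· > ·)) : IsPeakComposition n l := by
  refine ⟨hcomp, fun i hi => ?_⟩
  have := part_lt_part_of_pairwise hl (r := i + 1) (r' := i + 2) (by omega) (by omega) (by omega)
  have := one_le_part hcomp.1 (r := i + 2) (by omega) (by omega)
  rw [getD_eq_part]
  omega

/-- Let `l` be a strict partition (a composition of `n` with strictly
decreasing parts; automatically a peak composition). Then
`PYQS_l = Σ_α sgn(σ_α) · QSQ_α`, the sum over all peak compositions `α` whose decreasing
rearrangement is `l`, where `σ_α` is the unique permutation of positions rearranging `α`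
into `l`.  The coefficient function `ε` is pinned down by the hypothesis `hε`. -/
theorem PYQS_strict_partition (n : ℕ) (l : List ℕ) (hcomp : IsComposition n l)
    (hstrict : l.Chain' (· > ·)) (ε : List ℕ → ℤ)
    (hε : ∀ α : List ℕ, α.Perm l → ∀ σ : Equiv.Perm (Fin l.length),
      (∀ k : Fin l.length, l.get k = α.getD (σ k : ℕ) 0) →
      ε α = (Equiv.Perm.sign σ : ℤ)) :
    PYQS n l = ∑ᶠ α ∈ {α : List ℕ | IsPeakComposition n α ∧ α.Perm l}, ε α • QSQ n α := by
  have hl : l.Pairwise (· > ·) := List.isChain_iff_pairwise.1 hstrict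
  have hεl : ε l = 1 := by
    rw [hε l (List.Perm.refl l) 1 fun k => (List.getD_eq_getElem _ _ k.2).symm,
      Equiv.Perm.sign_one, Units.val_one]
  rw [PYQS_eq_sum_qsqTerm n hcomp.1, finsum_smul_QSQ_eq_sum_spitPairs,
    ← Finset.sum_filter_add_sum_filter_not (spitPairs n l) fun x => HasCollision x.1 x.2,
    sum_spitPairs_hasCollision_eq_zero (hl.imp ne_of_gt) ε hε, zero_add,
    sum_spitPairs_not_hasCollision hl hcomp.1 (hcomp.isPeakComposition_of_pairwise hl) ε hεl]

end PaperSPIT
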